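/- arXiv:2308.11999 — 11 statements merged into one kernel-verified Lean document; each statement's English description precedes it below -/
import Mathlib

section
/- Let α ∈ (0,1) be a real number and n a positive integer. Let 0 = x_0 < x_1 < ⋯ < x_m be the distinct elements of the set { {iα} : 0 ≤ i ≤ n }, and consider the lengths of the m+1 subintervals [x_0,x_1), [x_1,x_2), …, [x_{m−1},x_m), [x_m,1) of [0,1). Then these lengths take at most three distinct values, and whenever exactly three distinct values occur, the largest value equals the sum of the other two. -/
/-!
Let `a = {pα}` be the smallest of the points `{iα}`, `1 ≤ i ≤ n`, and `1 - b = {qα}` the largest.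
The successor of `{iα}` is `{(i + p)α} = {iα} + a` if `i + p ≤ n`, `{(i - q)α} = {iα} + b` if
`i > q`, `1 = {iα} + b` if `i = q`, and `{(i + p - q)α} = {iα} + a + b` otherwise; in each case
the extremality of `p` and `q` rules out a point strictly in between. This needs the points to be
distinct: if `{dα} = 0` for some `0 < d ≤ n`, the points are `d`-periodic and one passes to
`n = d - 1` for the least such `d`.
-/

open Int

def fractPoints (α : ℝ) (N : ℕ) : Set ℝ := {x | ∃ i : ℕ, i ≤ N ∧ x = fract ((i : ℝ) * α)}

noncomputable def nextPoint (S : Set ℝ) (x : ℝ) : ℝ := sInf ({y | y ∈ S ∧ x < y} ∪ {1})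

lemma nextPoint_eq {S : Set ℝ} {x z : ℝ} (hz : z ∈ S ∧ x < z ∨ z = 1) (hz1 : z ≤ 1)
    (hmin : ∀ y ∈ S, x < y → z ≤ y) : nextPoint S x = z := by
  refine IsLeast.csInf_eq ⟨?_, ?_⟩
  · rcases hz with hz | rfl
    · exact Or.inl hz
    · exact Or.inr rfl
  · rintro y (⟨hyS, hxy⟩ | rfl)
    · exact hmin y hyS hxy
    · exact hz1

section
variable {α : ℝ}

lemma fract_natCast_sub_mul {i j : ℕ} (h : j ≤ i) :
    fract (((i - j : ℕ) : ℝ) * α) = fract (fract (i * α) - fract (j * α)) := by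
  rw [Nat.cast_sub h, sub_mul, fract_eq_fract]
  exact ⟨⌊(i : ℝ) * α⌋ - ⌊(j : ℝ) * α⌋, by push_cast [fract]; ring⟩

lemma fract_natCast_sub_mul_of_le {i j : ℕ} (h : j ≤ i) (hle : fract (j * α) ≤ fract (i * α)) :
    fract (((i - j : ℕ) : ℝ) * α) = fract (i * α) - fract (j * α) := by
  rw [fract_natCast_sub_mul h, fract_eq_self]
  constructor <;> linarith [fract_nonneg ((j : ℝ) * α), fract_lt_one ((i : ℝ) * α)]

lemma fract_natCast_sub_mul_of_lt {i j : ℕ} (h : j ≤ i) (hlt : fract (i * α) < fract (j * α)) :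
    fract (((i - j : ℕ) : ℝ) * α) = fract (i * α) - fract (j * α) + 1 := by
  rw [fract_natCast_sub_mul h, ← fract_add_one, fract_eq_self]
  constructor <;> linarith [fract_nonneg ((i : ℝ) * α), fract_lt_one ((j : ℝ) * α)]

variable {N p q i : ℕ}

lemma nextPoint_of_add_le (hp0 : 0 < fract (p * α))
    (hpmin : ∀ j, 1 ≤ j → j ≤ N → fract (p * α) ≤ fract (j * α)) (hiN : i + p ≤ N) :
    nextPoint (fractPoints α N) (fract (i * α)) = fract (i * α) + fract (p * α) := by
  have hp : 1 ≤ p := Nat.one_le_iff_ne_zero.2 (by rintro rfl; simp at hp0)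
  have hshift : fract (((i + p : ℕ) : ℝ) * α) = fract (i * α) + fract (p * α) := by
    have h := fract_natCast_sub_mul_of_le (Nat.le_add_left p i) (hpmin _ (by omega) hiN)
    rw [Nat.add_sub_cancel] at h
    linarith
  rw [← hshift]
  refine nextPoint_eq (Or.inl ⟨⟨i + p, hiN, rfl⟩, by linarith⟩) (fract_lt_one _).le ?_
  rintro _ ⟨j, hj, rfl⟩ hij
  by_contra! hji
  rcases lt_trichotomy i j with h | rfl | h
  · have := fract_natCast_sub_mul_of_le h.le hij.le
    linarith [hpmin (j - i) (by omega) (by omega)]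
  · exact lt_irrefl _ hij
  · have := fract_natCast_sub_mul_of_le (show j ≤ i + p by omega) hji.le
    linarith [hpmin (i + p - j) (by omega) (by omega)]

lemma nextPoint_of_max (hqmax : ∀ j ≤ N, fract (j * α) ≤ fract (q * α)) :
    nextPoint (fractPoints α N) (fract (q * α)) = 1 :=
  nextPoint_eq (Or.inr rfl) le_rfl fun _ ⟨j, hj, hy⟩ hqj => by rw [hy] at hqj; linarith [hqmax j hj]

lemma nextPoint_of_lt (hnz : ∀ j, 1 ≤ j → j ≤ N → fract (j * α) ≠ 0)
    (hqmax : ∀ j ≤ N, fract (j * α) ≤ fract (q * α)) (hqi : q < i) (hiN : i ≤ N) :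
    nextPoint (fractPoints α N) (fract (i * α)) = fract (i * α) + (1 - fract (q * α)) := by
  have hiq : fract (i * α) < fract (q * α) := by
    refine (hqmax i hiN).lt_of_ne fun h => hnz (i - q) (by omega) (by omega) ?_
    rw [fract_natCast_sub_mul_of_le hqi.le h.ge, h, sub_self]
  have hshift := fract_natCast_sub_mul_of_lt hqi.le hiq
  rw [add_sub_assoc', ← sub_add_eq_add_sub, ← hshift]
  refine nextPoint_eq (Or.inl ⟨⟨i - q, by omega, rfl⟩, ?_⟩) (fract_lt_one _).le ?_
  · linarith [fract_lt_one ((q : ℝ) * α)]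
  rintro _ ⟨j, hj, rfl⟩ hij
  by_contra! hji
  rcases lt_trichotomy i j with h | rfl | h
  · have := fract_natCast_sub_mul_of_lt (show i - q ≤ j by omega) hji
    linarith [hqmax (j - (i - q)) (by omega)]
  · exact lt_irrefl _ hij
  · have := fract_natCast_sub_mul_of_lt h.le hij
    linarith [hqmax (i - j) (by omega)]

lemma add_sub_le_fract_of_lt (hnz : ∀ j, 1 ≤ j → j ≤ N → fract (j * α) ≠ 0)
    (hpmin : ∀ j, 1 ≤ j → j ≤ N → fract (p * α) ≤ fract (j * α))
    (hqmax : ∀ j ≤ N, fract (j * α) ≤ fract (q * α)) {m : ℕ} (hm : 1 ≤ m) (hmp : m < p)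
    (hpN : p ≤ N) : fract (p * α) + (1 - fract (q * α)) ≤ fract (m * α) := by
  have hpm : fract (p * α) < fract (m * α) := by
    refine (hpmin m hm (by omega)).lt_of_ne fun h => hnz (p - m) (by omega) (by omega) ?_
    rw [fract_natCast_sub_mul_of_le hmp.le h.ge, h, sub_self]
  have := fract_natCast_sub_mul_of_lt hmp.le hpm
  linarith [hqmax (p - m) (by omega)]

lemma fract_add_le_of_lt (hpmin : ∀ j, 1 ≤ j → j ≤ N → fract (p * α) ≤ fract (j * α))
    (hqmax : ∀ j ≤ N, fract (j * α) ≤ fract (q * α)) {l : ℕ} (hlq : l < q) (hqN : q ≤ N) :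
    fract (l * α) + fract (p * α) ≤ fract (q * α) := by
  have := fract_natCast_sub_mul_of_le hlq.le (hqmax l (by omega))
  linarith [hpmin (q - l) (by omega) (by omega)]

lemma nextPoint_of_lt_of_lt_add (hnz : ∀ j, 1 ≤ j → j ≤ N → fract (j * α) ≠ 0)
    (hp0 : 0 < fract (p * α)) (hpmin : ∀ j, 1 ≤ j → j ≤ N → fract (p * α) ≤ fract (j * α))
    (hqmax : ∀ j ≤ N, fract (j * α) ≤ fract (q * α)) (hpN : p ≤ N) (hqN : q ≤ N)
    (hiq : i < q) (hNi : N < i + p) :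
    nextPoint (fractPoints α N) (fract (i * α)) =
      fract (i * α) + fract (p * α) + (1 - fract (q * α)) := by
  have hm := fract_natCast_sub_mul_of_le hiq.le (hqmax i (by omega))
  have hgap := add_sub_le_fract_of_lt hnz hpmin hqmax (m := q - i) (by omega) (by omega) hpN
  have hshift := fract_natCast_sub_mul_of_lt (show q - i ≤ p by omega)
    (by linarith [fract_lt_one ((q : ℝ) * α)])
  rw [hm] at hshift
  have hz : fract (((p - (q - i) : ℕ) : ℝ) * α) =
      fract (i * α) + fract (p * α) + (1 - fract (q * α)) := by
    linarith
  rw [← hz]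
  refine nextPoint_eq (Or.inl ⟨⟨p - (q - i), by omega, rfl⟩, ?_⟩) (fract_lt_one _).le ?_
  · linarith [fract_lt_one ((q : ℝ) * α)]
  rintro _ ⟨j, hj, rfl⟩ hij
  by_contra! hji
  rcases lt_trichotomy i j with h | rfl | h
  · have := fract_natCast_sub_mul_of_le h.le hij.le
    linarith [add_sub_le_fract_of_lt hnz hpmin hqmax (m := j - i) (by omega) (by omega) hpN]
  · exact lt_irrefl _ hij
  · have := fract_natCast_sub_mul_of_lt h.le hij
    linarith [fract_add_le_of_lt hpmin hqmax (l := i - j) (by omega) hqN]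

theorem exists_nextPoint_sub_mem (hnz : ∀ j, 1 ≤ j → j ≤ N → fract (j * α) ≠ 0) :
    ∃ a b : ℝ, 0 < a ∧ 0 < b ∧ ∀ x ∈ fractPoints α N,
      nextPoint (fractPoints α N) x - x ∈ ({a, b, a + b} : Set ℝ) := by
  obtain ⟨q, hqN, hqmax⟩ := Finset.exists_max_image (Finset.range (N + 1))
    (fun j : ℕ => fract (j * α)) ⟨0, by simp⟩
  simp only [Finset.mem_range, Nat.lt_succ_iff] at hqN hqmax
  rcases Nat.eq_zero_or_pos N with rfl | hN
  · refine ⟨1 / 2, 1 / 2, by norm_num, by norm_num, ?_⟩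
    rintro _ ⟨i, hi, rfl⟩
    obtain rfl : i = 0 := by omega
    obtain rfl : q = 0 := by omega
    rw [nextPoint_of_max hqmax]
    norm_num
  obtain ⟨p, hp, hpmin⟩ := Finset.exists_min_image (Finset.Icc 1 N)
    (fun j : ℕ => fract (j * α)) ⟨1, Finset.mem_Icc.2 ⟨le_rfl, hN⟩⟩
  simp only [Finset.mem_Icc, and_imp] at hp hpmin
  have hp0 : 0 < fract (p * α) := (fract_nonneg _).lt_of_ne (hnz p hp.1 hp.2).symm
  refine ⟨fract (p * α), 1 - fract (q * α), hp0, sub_pos.2 (fract_lt_one _), ?_⟩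
  rintro _ ⟨i, hi, rfl⟩
  simp only [Set.mem_insert_iff, Set.mem_singleton_iff]
  rcases le_or_gt (i + p) N with hiN | hNi
  · rw [nextPoint_of_add_le hp0 hpmin hiN]
    left; ring
  rcases lt_trichotomy i q with hiq | rfl | hqi
  · rw [nextPoint_of_lt_of_lt_add hnz hp0 hpmin hqmax hp.2 hqN hiq hNi]
    right; right; ring
  · rw [nextPoint_of_max hqmax]
    right; left; rfl
  · rw [nextPoint_of_lt hnz hqmax hqi hi]
    right; left; ring

end

lemma fractPoints_eq_of_fract_eq_zero {α : ℝ} {N d : ℕ} (hd0 : 0 < d)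
    (hd : fract (d * α) = 0) (hdN : d ≤ N + 1) : fractPoints α N = fractPoints α (d - 1) := by
  have hdz : (d : ℝ) * α = ⌊(d : ℝ) * α⌋ := by rw [← sub_eq_zero]; exact hd
  ext x
  constructor
  · rintro ⟨i, -, rfl⟩
    refine ⟨i % d, by have := Nat.mod_lt i hd0; omega,
      fract_eq_fract.2 ⟨(i / d : ℕ) * ⌊(d : ℝ) * α⌋, ?_⟩⟩
    have hi : (i : ℝ) = d * (i / d : ℕ) + (i % d : ℕ) := by
      exact_mod_cast (Nat.div_add_mod i d).symm
    rw [Int.cast_mul, Int.cast_natCast, hi, ← hdz]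
    ring
  · rintro ⟨i, hi, rfl⟩
    exact ⟨i, by omega, rfl⟩

lemma exists_fractPoints_eq_of_fract_ne_zero (α : ℝ) (N : ℕ) :
    ∃ M : ℕ, (∀ j, 1 ≤ j → j ≤ M → fract (j * α) ≠ 0) ∧ fractPoints α N = fractPoints α M := by
  by_cases h : ∃ d, 0 < d ∧ d ≤ N ∧ fract (d * α) = 0
  · obtain ⟨hd0, hdN, hd⟩ := Nat.find_spec h
    refine ⟨Nat.find h - 1, fun j hj hjd hj0 => Nat.find_min h (by omega) ⟨hj, by omega, hj0⟩,
      fractPoints_eq_of_fract_eq_zero (d := Nat.find h) hd0 hd (by omega)⟩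
  · push Not at h
    exact ⟨N, fun j hj hjN => h j hj hjN, rfl⟩

lemma ncard_le_three_of_subset {L : Set ℝ} {a b : ℝ} (ha : 0 < a) (hb : 0 < b)
    (hL : L ⊆ {a, b, a + b}) :
    L.ncard ≤ 3 ∧ (L.ncard = 3 → ∃ u v w : ℝ, L = {u, v, w} ∧ u < v ∧ v < w ∧ w = u + v) := by
  have hcard : ({a, b, a + b} : Set ℝ).ncard ≤ 3 := by
    rw [← Finset.coe_pair, ← Finset.coe_insert, Set.ncard_coe_finset]
    exact Finset.card_le_three
  have hL3 := (Set.ncard_le_ncard hL).trans hcard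
  refine ⟨hL3, fun h3 => ?_⟩
  have hLeq : L = {a, b, a + b} := Set.eq_of_subset_of_ncard_le hL (h3 ▸ hcard)
  have hab : a ≠ b := by
    rintro rfl
    have : ({a, a, a + a} : Set ℝ).ncard ≤ 2 := by
      rw [Set.insert_idem, ← Finset.coe_pair, Set.ncard_coe_finset]
      exact Finset.card_le_two
    rw [hLeq] at h3
    omega
  rcases hab.lt_or_gt with hab | hba
  · exact ⟨a, b, a + b, hLeq, hab, by linarith, rfl⟩
  · exact ⟨b, a, b + a, by rw [hLeq, Set.insert_comm, add_comm], hba, by linarith, rfl⟩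

theorem three_distance_at_most_three_lengths_general
    (α : ℝ) (n : ℕ) :
    let S : Set ℝ := {x | ∃ i : ℕ, i ≤ n ∧ x = Int.fract ((i : ℝ) * α)}
    let next : ℝ → ℝ := fun x => sInf ({y | y ∈ S ∧ x < y} ∪ {1})
    let L : Set ℝ := (fun x => next x - x) '' S
    L.ncard ≤ 3 ∧
      (L.ncard = 3 → ∃ u v w : ℝ, L = {u, v, w} ∧ u < v ∧ v < w ∧ w = u + v) := by
  intro S next L
  obtain ⟨M, hnz, hSM⟩ := exists_fractPoints_eq_of_fract_ne_zero α n
  obtain ⟨a, b, ha, hb, hgaps⟩ := exists_nextPoint_sub_mem hnz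
  have hL : L = (fun x => nextPoint (fractPoints α M) x - x) '' fractPoints α M := by
    rw [← hSM]; rfl
  exact ncard_le_three_of_subset ha hb (hL ▸ Set.image_subset_iff.2 hgaps)

/-- **Three distance theorem** (qualitative form).
For a real `α ∈ (0,1)` and a positive integer `n`, consider the set `S` of
fractional parts `{i·α}` for `0 ≤ i ≤ n`, and for each point of `S` the length
of the subinterval of `[0,1)` from that point to the next larger point of `S`
(or to `1` for the largest point).  These lengths take at most three distinct
values, and if exactly three distinct values occur, the largest equals the sum
of the other two. -/
theorem three_distance_at_most_three_lengths
    (α : ℝ) (hα : α ∈ Set.Ioo (0 : ℝ) 1) (n : ℕ) (hn : 0 < n) :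
    let S : Set ℝ := {x | ∃ i : ℕ, i ≤ n ∧ x = Int.fract ((i : ℝ) * α)}
    let next : ℝ → ℝ := fun x => sInf ({y | y ∈ S ∧ x < y} ∪ {1})
    let L : Set ℝ := (fun x => next x - x) '' S
    L.ncard ≤ 3 ∧
      (L.ncard = 3 → ∃ u v w : ℝ, L = {u, v, w} ∧ u < v ∧ v < w ∧ w = u + v) :=
  three_distance_at_most_three_lengths_general α n
end

section
/- In the Farey-pair setting, the minimum of {iα} over all integers i with 1 ≤ i ≤ n equals s = bα − a, and it is attained only at i = b. -/
/-!
Since `b * c - a * d = 1`, every lattice point `(i, j)` is an integer combination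
`u • (b, a) + v • (d, c)`, and then `i * α - j = u * s - v * t` with `s, t > 0`.
For `1 ≤ i ≤ n < b + d` and `j = ⌊i * α⌋`, the fractional part `u * s - v * t` is nonnegative,
which forces `v ≤ 0` and then `u ≥ 1`; hence `{i * α} = s + (u - 1) * s + (-v) * t ≥ s`,
with equality only for `(u, v) = (1, 0)`, that is `i = b`.
-/

section FareyCoordinates

variable {a b c d : ℤ}

theorem farey_coords_combination (hdet : b * c - a * d = 1) (i j : ℤ) :
    (i * c - j * d) * b + (j * b - i * a) * d = i := by
  linear_combination i * hdet

theorem farey_mul_sub_eq (hdet : b * c - a * d = 1) (α : ℝ) (i j : ℤ) :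
    i * α - j = ((i * c - j * d : ℤ) : ℝ) * (b * α - a) - ((j * b - i * a : ℤ) : ℝ) * (c - d * α) := by
  have hdetR : (b : ℝ) * c - a * d = 1 := by exact_mod_cast hdet
  push_cast
  linear_combination (-(i * α - j)) * hdetR

theorem farey_mul_sub_lt_one (hdet : b * c - a * d = 1) {α : ℝ} (hr : d * α < c) (hb : 0 < b) :
    d * (b * α - a) < 1 := by
  have hdetR : (b : ℝ) * c - a * d = 1 := by exact_mod_cast hdet
  have hbR : (0 : ℝ) < b := by exact_mod_cast hb
  calc (d : ℝ) * (b * α - a) = b * (d * α) - a * d := by ring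
    _ < b * c - a * d := by gcongr
    _ = 1 := hdetR

end FareyCoordinates

section Coefficients

variable {s t : ℝ} {b d u v : ℤ}

theorem one_le_and_nonpos_of_sub_nonneg (hs : 0 ≤ s) (ht : 0 < t) (hb : 0 < b) (hd : 0 ≤ d)
    (hpos : 1 ≤ u * b + v * d) (hlt : u * b + v * d < b + d) (h : 0 ≤ u * s - v * t) :
    1 ≤ u ∧ v ≤ 0 := by
  have hv : v ≤ 0 := by
    by_contra! hv
    have hu : u ≤ 0 := by nlinarith
    have huR : (u : ℝ) ≤ 0 := by exact_mod_cast hu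
    have hvR : (1 : ℝ) ≤ v := by exact_mod_cast hv
    nlinarith [mul_nonpos_of_nonpos_of_nonneg huR hs]
  refine ⟨?_, hv⟩
  by_contra! hu
  nlinarith

theorem le_mul_sub_mul (hs : 0 ≤ s) (ht : 0 ≤ t) (hu : 1 ≤ u) (hv : v ≤ 0) :
    s ≤ u * s - v * t := by
  have huR : (1 : ℝ) ≤ u := by exact_mod_cast hu
  have hvR : (v : ℝ) ≤ 0 := by exact_mod_cast hv
  nlinarith [mul_nonneg (sub_nonneg.mpr huR) hs, mul_nonneg (neg_nonneg.mpr hvR) ht]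

theorem eq_one_and_eq_zero_of_mul_sub_mul_eq (hs : 0 < s) (ht : 0 < t) (hu : 1 ≤ u) (hv : v ≤ 0)
    (h : u * s - v * t = s) : u = 1 ∧ v = 0 := by
  have huR : (1 : ℝ) ≤ u := by exact_mod_cast hu
  have hvR : (v : ℝ) ≤ 0 := by exact_mod_cast hv
  have hu' : (u : ℝ) = 1 := by nlinarith [mul_nonneg (neg_nonneg.mpr hvR) ht.le]
  have hv' : (v : ℝ) = 0 := by nlinarith [mul_nonneg (sub_nonneg.mpr huR) hs.le]
  exact ⟨by exact_mod_cast hu', by exact_mod_cast hv'⟩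

end Coefficients

theorem fract_mul_eq_of_lt_add {a b c d : ℤ} {α : ℝ} (hdet : b * c - a * d = 1)
    (hl : a < b * α) (hr : d * α < c) (hb : 0 < b) (hd : 0 ≤ d) {i : ℤ} (hi : 1 ≤ i)
    (hin : i < b + d) :
    ∃ u v : ℤ, 1 ≤ u ∧ v ≤ 0 ∧ i = u * b + v * d ∧
      Int.fract (i * α) = u * (b * α - a) - v * (c - d * α) := by
  let j := ⌊(i : ℝ) * α⌋
  have hfract := (Int.self_sub_floor ((i : ℝ) * α)).symm.trans (farey_mul_sub_eq hdet α i j)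
  have hi_eq := farey_coords_combination hdet i j
  obtain ⟨hu, hv⟩ := one_le_and_nonpos_of_sub_nonneg (sub_pos.mpr hl).le (sub_pos.mpr hr) hb hd
    (by rw [hi_eq]; exact hi) (by rw [hi_eq]; exact hin) (hfract ▸ Int.fract_nonneg _)
  exact ⟨_, _, hu, hv, hi_eq.symm, hfract⟩

theorem fract_min_eq_s_general
    (n : ℕ) (α : ℝ)
    (a b c d : ℤ)
    (hdet : b * c - a * d = 1) (hb : b ≤ (n : ℤ)) (hd : d ≤ (n : ℤ))
    (hbd : (n : ℤ) + 1 ≤ b + d)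
    (hl : (a : ℝ) / (b : ℝ) < α) (hr : α < (c : ℝ) / (d : ℝ)) :
    let s : ℝ := (b : ℝ) * α - (a : ℝ)
    (∀ i : ℕ, 1 ≤ i → i ≤ n → s ≤ Int.fract ((i : ℝ) * α)) ∧
    Int.fract ((b : ℝ) * α) = s ∧
    (∀ i : ℕ, 1 ≤ i → i ≤ n → Int.fract ((i : ℝ) * α) = s → (i : ℤ) = b) := by
  intro s
  have hb0 : 0 < b := by omega
  have hd0 : 0 < d := by omega
  have hl' : (a : ℝ) < b * α := by
    rw [mul_comm]; exact (div_lt_iff₀ (by exact_mod_cast hb0)).mp hl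
  have hr' : (d : ℝ) * α < c := by
    rw [mul_comm]; exact (lt_div_iff₀ (by exact_mod_cast hd0)).mp hr
  have hs : 0 < s := sub_pos.mpr hl'
  have ht : 0 < (c : ℝ) - d * α := sub_pos.mpr hr'
  have hcoords (i : ℕ) (hi : 1 ≤ i) (hin : i ≤ n) := by
    have h := fract_mul_eq_of_lt_add hdet hl' hr' hb0 hd0.le (i := i) (by omega) (by omega)
    simp only [Int.cast_natCast] at h
    exact h
  refine ⟨fun i hi hin => ?_, ?_, fun i hi hin hi_eq => ?_⟩
  · obtain ⟨u, v, hu, hv, -, hfract⟩ := hcoords i hi hin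
    exact hfract ▸ le_mul_sub_mul hs.le ht.le hu hv
  · have hs1 : s < 1 := by
      have hd1 : (1 : ℝ) ≤ d := by exact_mod_cast hd0
      nlinarith [farey_mul_sub_lt_one hdet hr' hb0]
    rw [show (b : ℝ) * α = s + a by ring, Int.fract_add_intCast, Int.fract_eq_self]
    exact ⟨hs.le, hs1⟩
  · obtain ⟨u, v, hu, hv, hi_uv, hfract⟩ := hcoords i hi hin
    obtain ⟨rfl, rfl⟩ := eq_one_and_eq_zero_of_mul_sub_mul_eq hs ht hu hv (hfract ▸ hi_eq)
    simpa using hi_uv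

/-- In the Farey-pair setting, the minimum of `{i·α}` over `1 ≤ i ≤ n` equals
`s = bα - a`, attained only at `i = b`. -/
theorem fract_min_eq_s
    (n : ℕ) (hn : 0 < n) (α : ℝ) (hα : α ∈ Set.Ioo (0 : ℝ) 1)
    (hirr : ¬ ∃ p q : ℤ, 0 < q ∧ q ≤ (n : ℤ) ∧ α = (p : ℝ) / (q : ℝ))
    (a b c d : ℤ) (ha : 0 ≤ a) (hab : a < b) (hc : 0 < c) (hcd : c ≤ d)
    (hdet : b * c - a * d = 1) (hb : b ≤ (n : ℤ)) (hd : d ≤ (n : ℤ))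
    (hbd : (n : ℤ) + 1 ≤ b + d)
    (hl : (a : ℝ) / (b : ℝ) < α) (hr : α < (c : ℝ) / (d : ℝ)) :
    let s : ℝ := (b : ℝ) * α - (a : ℝ)
    (∀ i : ℕ, 1 ≤ i → i ≤ n → s ≤ Int.fract ((i : ℝ) * α)) ∧
    Int.fract ((b : ℝ) * α) = s ∧
    (∀ i : ℕ, 1 ≤ i → i ≤ n → Int.fract ((i : ℝ) * α) = s → (i : ℤ) = b) :=
  fract_min_eq_s_general n α a b c d hdet hb hd hbd hl hr
end

section
/- In the Farey-pair setting, the maximum of {iα} over all integers i with 1 ≤ i ≤ n equals 1 − t = dα − c + 1, and it is attained only at i = d. -/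
/-!
Since `b * c - a * d = 1`, every pair of integers `(i, j)` is an integral combination of
`(b, a)` and `(d, c)`, so that `j - i * α = u * s + y * t` with `s = b * α - a > 0`,
`t = c - d * α > 0` and `i = y * d - u * b`. If `0 < i < b + d` and `j - i * α > 0`,
then `u ≥ 0` and `y ≥ 1`, hence `j - i * α ≥ t` with equality only for `(u, y) = (0, 1)`,
i.e. `i = d`. Taking `j = ⌊i * α⌋ + 1` turns this into `{i * α} ≤ 1 - t`, and
`⌊d * α⌋ = c - 1` because `0 < t < 1`.
-/

section Farey

variable {K : Type*} [Field K] [LinearOrder K] [IsStrictOrderedRing K]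
  {a b c d : ℤ} {α : K}

lemma farey_first_coord (hdet : b * c - a * d = 1) (i j : ℤ) :
    i = (j * b - i * a) * d - (j * d - i * c) * b := by
  linear_combination (-i) * hdet

lemma farey_sub_mul_eq (hdet : b * c - a * d = 1) (i j : ℤ) :
    (j : K) - i * α =
      ((j * d - i * c : ℤ) : K) * (b * α - a) + ((j * b - i * a : ℤ) : K) * (c - d * α) := by
  have hdet' : (b : K) * c - a * d = 1 := by exact_mod_cast hdet
  push_cast
  linear_combination (α * i - j) * hdet'

lemma farey_right_gap_lt_one (hdet : b * c - a * d = 1) (hb : 0 < b) (hd : 0 < d)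
    (hs : 0 < (b : K) * α - a) : (c : K) - d * α < 1 := by
  have hdet' : (b : K) * c - a * d = 1 := by exact_mod_cast hdet
  have hsum : (d : K) * (b * α - a) + b * (c - d * α) = 1 := by linear_combination hdet'
  have hb' : (1 : K) ≤ b := by exact_mod_cast hb
  have hd' : (0 : K) < d := by exact_mod_cast hd
  nlinarith [mul_pos hd' hs]

lemma farey_coeffs_nonneg_and_one_le (hdet : b * c - a * d = 1) (hb : 0 < b) (hd : 0 < d)
    (hs : 0 < (b : K) * α - a) (ht : 0 < (c : K) - d * α)
    {i j : ℤ} (hi : 0 < i) (hibd : i < b + d) (hpos : 0 < (j : K) - i * α) :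
    0 ≤ j * d - i * c ∧ 1 ≤ j * b - i * a := by
  have hi_eq := farey_first_coord hdet i j
  rw [farey_sub_mul_eq hdet i j] at hpos
  set u := j * d - i * c
  set y := j * b - i * a
  have hy : 1 ≤ y := by
    by_contra! hy
    have hu : u < 0 := by nlinarith
    have hu' : (u : K) < 0 := by exact_mod_cast hu
    have hy' : (y : K) ≤ 0 := by exact_mod_cast Int.lt_add_one_iff.mp hy
    nlinarith [mul_neg_of_neg_of_pos hu' hs, mul_nonpos_of_nonpos_of_nonneg hy' ht.le]
  refine ⟨?_, hy⟩
  by_contra! hu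
  nlinarith

lemma farey_right_gap_le (hdet : b * c - a * d = 1) (hb : 0 < b) (hd : 0 < d)
    (hs : 0 < (b : K) * α - a) (ht : 0 < (c : K) - d * α)
    {i j : ℤ} (hi : 0 < i) (hibd : i < b + d) (hpos : 0 < (j : K) - i * α) :
    (c : K) - d * α ≤ j - i * α := by
  obtain ⟨hu, hy⟩ := farey_coeffs_nonneg_and_one_le hdet hb hd hs ht hi hibd hpos
  have hu' : (0 : K) ≤ (j * d - i * c : ℤ) := by exact_mod_cast hu
  have hy' : (1 : K) ≤ (j * b - i * a : ℤ) := by exact_mod_cast hy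
  rw [farey_sub_mul_eq hdet i j]
  nlinarith [mul_nonneg hu' hs.le]

lemma eq_of_farey_right_gap_eq (hdet : b * c - a * d = 1) (hb : 0 < b) (hd : 0 < d)
    (hs : 0 < (b : K) * α - a) (ht : 0 < (c : K) - d * α)
    {i j : ℤ} (hi : 0 < i) (hibd : i < b + d) (hpos : 0 < (j : K) - i * α)
    (heq : (j : K) - i * α = c - d * α) : i = d := by
  obtain ⟨hu, hy⟩ := farey_coeffs_nonneg_and_one_le hdet hb hd hs ht hi hibd hpos
  have hu' : (0 : K) ≤ (j * d - i * c : ℤ) := by exact_mod_cast hu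
  have hy' : (1 : K) ≤ (j * b - i * a : ℤ) := by exact_mod_cast hy
  rw [farey_sub_mul_eq hdet i j] at heq
  have hu0 : j * d - i * c = 0 := by
    have : ((j * d - i * c : ℤ) : K) = 0 := by nlinarith [mul_nonneg hu' hs.le]
    exact_mod_cast this
  have hy1 : j * b - i * a = 1 := by
    have : ((j * b - i * a : ℤ) : K) = 1 := by nlinarith [mul_nonneg hu' hs.le]
    exact_mod_cast this
  rw [farey_first_coord hdet i j, hu0, hy1]
  ring

end Farey

lemma one_sub_fract_eq {R : Type*} [Ring R] [LinearOrder R] [FloorRing R] (x : R) :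
    1 - Int.fract x = ((⌊x⌋ + 1 : ℤ) : R) - x := by
  rw [Int.fract]; push_cast; abel

section FloorRing

variable {K : Type*} [Field K] [LinearOrder K] [IsStrictOrderedRing K] [FloorRing K]
  {a b c d : ℤ} {α : K}

lemma fract_le_one_sub_farey_right_gap (hdet : b * c - a * d = 1) (hb : 0 < b) (hd : 0 < d)
    (hs : 0 < (b : K) * α - a) (ht : 0 < (c : K) - d * α)
    {i : ℤ} (hi : 0 < i) (hibd : i < b + d) :
    Int.fract ((i : K) * α) ≤ 1 - (c - d * α) := by
  have hpos : 0 < ((⌊(i : K) * α⌋ + 1 : ℤ) : K) - i * α := by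
    rw [← one_sub_fract_eq]; linarith [Int.fract_lt_one ((i : K) * α)]
  have := farey_right_gap_le hdet hb hd hs ht hi hibd hpos
  rw [← one_sub_fract_eq] at this
  linarith

lemma fract_mul_eq_one_sub_farey_right_gap (hdet : b * c - a * d = 1) (hb : 0 < b) (hd : 0 < d)
    (hs : 0 < (b : K) * α - a) (ht : 0 < (c : K) - d * α) :
    Int.fract ((d : K) * α) = 1 - (c - d * α) := by
  have ht1 := farey_right_gap_lt_one hdet hb hd hs
  have hfloor : ⌊(d : K) * α⌋ = c - 1 := by
    rw [Int.floor_eq_iff]; push_cast; constructor <;> linarith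
  rw [Int.fract, hfloor]; push_cast; ring

lemma eq_of_fract_eq_one_sub_farey_right_gap (hdet : b * c - a * d = 1) (hb : 0 < b)
    (hd : 0 < d) (hs : 0 < (b : K) * α - a) (ht : 0 < (c : K) - d * α)
    {i : ℤ} (hi : 0 < i) (hibd : i < b + d)
    (heq : Int.fract ((i : K) * α) = 1 - (c - d * α)) : i = d := by
  have hpos : 0 < ((⌊(i : K) * α⌋ + 1 : ℤ) : K) - i * α := by
    rw [← one_sub_fract_eq]; linarith [Int.fract_lt_one ((i : K) * α)]
  refine eq_of_farey_right_gap_eq hdet hb hd hs ht hi hibd hpos ?_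
  rw [← one_sub_fract_eq, heq]
  ring

end FloorRing

theorem fract_max_eq_one_sub_t_general
    (n : ℕ) (α : ℝ)
    (a b c d : ℤ) (ha : 0 ≤ a) (hab : a < b) (hc : 0 < c) (hcd : c ≤ d)
    (hdet : b * c - a * d = 1)
    (hbd : (n : ℤ) + 1 ≤ b + d)
    (hl : (a : ℝ) / (b : ℝ) < α) (hr : α < (c : ℝ) / (d : ℝ)) :
    let t : ℝ := (c : ℝ) - (d : ℝ) * α
    (∀ i : ℕ, 1 ≤ i → i ≤ n → Int.fract ((i : ℝ) * α) ≤ 1 - t) ∧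
    Int.fract ((d : ℝ) * α) = 1 - t ∧
    (1 - t = (d : ℝ) * α - (c : ℝ) + 1) ∧
    (∀ i : ℕ, 1 ≤ i → i ≤ n → Int.fract ((i : ℝ) * α) = 1 - t → (i : ℤ) = d) := by
  intro t
  have hb : 0 < b := ha.trans_lt hab
  have hd : 0 < d := hc.trans_le hcd
  have hs : 0 < (b : ℝ) * α - a := by
    rw [div_lt_iff₀ (by exact_mod_cast hb)] at hl; linarith
  have ht : 0 < (c : ℝ) - d * α := by
    rw [lt_div_iff₀ (by exact_mod_cast hd)] at hr; linarith
  refine ⟨fun i hi hin => ?_, fract_mul_eq_one_sub_farey_right_gap hdet hb hd hs ht,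
    by ring, fun i hi hin heq => ?_⟩
  · exact_mod_cast fract_le_one_sub_farey_right_gap hdet hb hd hs ht (i := i) (by omega)
      (by omega)
  · exact eq_of_fract_eq_one_sub_farey_right_gap hdet hb hd hs ht (by omega) (by omega)
      (by exact_mod_cast heq)

/-- In the Farey-pair setting, the maximum of `{i·α}` over `1 ≤ i ≤ n` equals
`1 - t = dα - c + 1`, attained only at `i = d`. -/
theorem fract_max_eq_one_sub_t
    (n : ℕ) (hn : 0 < n) (α : ℝ) (hα : α ∈ Set.Ioo (0 : ℝ) 1)
    (hirr : ¬ ∃ p q : ℤ, 0 < q ∧ q ≤ (n : ℤ) ∧ α = (p : ℝ) / (q : ℝ))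
    (a b c d : ℤ) (ha : 0 ≤ a) (hab : a < b) (hc : 0 < c) (hcd : c ≤ d)
    (hdet : b * c - a * d = 1) (hb : b ≤ (n : ℤ)) (hd : d ≤ (n : ℤ))
    (hbd : (n : ℤ) + 1 ≤ b + d)
    (hl : (a : ℝ) / (b : ℝ) < α) (hr : α < (c : ℝ) / (d : ℝ)) :
    let t : ℝ := (c : ℝ) - (d : ℝ) * α
    (∀ i : ℕ, 1 ≤ i → i ≤ n → Int.fract ((i : ℝ) * α) ≤ 1 - t) ∧
    Int.fract ((d : ℝ) * α) = 1 - t ∧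
    (1 - t = (d : ℝ) * α - (c : ℝ) + 1) ∧
    (∀ i : ℕ, 1 ≤ i → i ≤ n → Int.fract ((i : ℝ) * α) = 1 - t → (i : ℤ) = d) :=
  fract_max_eq_one_sub_t_general n α a b c d ha hab hc hcd hdet hbd hl hr
end

section
/- In the Farey-pair setting, for every integer i with 0 ≤ i ≤ n − b one has {(i+b)α} = {iα} + s, and {(i+b)α} is the immediate successor of {iα} in the set { {jα} : 0 ≤ j ≤ n }, i.e., no j with 0 ≤ j ≤ n satisfies {iα} < {jα} < {(i+b)α}. -/
/-!
Write `s = bα - a` and `t = c - dα`; both are positive. Since `bc - ad = 1`, every pair of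
integers is `(k, m) = u • (b, a) + v • (d, c)`, so `kα - m = u s - v t`. If `0 < kα - m ≤ s`,
the signs of `u` and `v` force `k = b`, `k ≥ b + d` or `k ≤ -d`. For indices in `[0, n]` with
`n < b + d` this rules out every difference `{jα} - {iα}` in `(0, s)`, and it also rules out
`1 - {iα} ≤ s` for `i ≤ n - b`, so adding `bα` to `iα` moves its fractional part up by `s`.
-/

lemma coeffs_cases_of_mul_sub_mul_mem_Ioc {s t : ℝ} (hs : 0 < s) (ht : 0 < t) {u v : ℤ}
    (h : u * s - v * t ∈ Set.Ioc 0 s) :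
    (u = 1 ∧ v = 0) ∨ (0 < u ∧ 0 < v) ∨ (u ≤ 0 ∧ v < 0) := by
  obtain ⟨hpos, hle⟩ := h
  rcases lt_trichotomy v 0 with hv | rfl | hv
  · have hvR : (v : ℝ) ≤ -1 := by exact_mod_cast (show v ≤ -1 by omega)
    have hu : u ≤ 0 := by
      by_contra! hu
      have huR : (1 : ℝ) ≤ u := by exact_mod_cast hu
      nlinarith
    exact Or.inr (Or.inr ⟨hu, hv⟩)
  · have hu0 : 0 < u := by
      have : (0 : ℝ) < u := by push_cast at hpos; nlinarith
      exact_mod_cast this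
    have hu1 : u ≤ 1 := by
      have : (u : ℝ) ≤ 1 := by push_cast at hle; nlinarith
      exact_mod_cast this
    exact Or.inl ⟨by omega, rfl⟩
  · have hvR : (0 : ℝ) < v := by exact_mod_cast hv
    have hu : 0 < u := by
      have : (0 : ℝ) < u := by nlinarith
      exact_mod_cast this
    exact Or.inr (Or.inl ⟨hu, hv⟩)

lemma eq_or_add_le_or_le_neg_of_mem_Ioc {α : ℝ} {a b c d : ℤ} (hdet : b * c - a * d = 1)
    (hb : 0 ≤ b) (hd : 0 ≤ d) (hs : 0 < b * α - a) (ht : 0 < c - d * α) {k m : ℤ}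
    (h : k * α - m ∈ Set.Ioc 0 (b * α - a)) :
    (k = b ∧ m = a) ∨ b + d ≤ k ∨ k ≤ -d := by
  set u := c * k - d * m
  set v := b * m - a * k
  have hk : k = u * b + v * d := by linear_combination (-k) * hdet
  have hm : m = u * a + v * c := by linear_combination (-m) * hdet
  have hkR : (k : ℝ) = u * b + v * d := by exact_mod_cast hk
  have hmR : (m : ℝ) = u * a + v * c := by exact_mod_cast hm
  have hrepr : (k : ℝ) * α - m = u * (b * α - a) - v * (c - d * α) := by
    rw [hkR, hmR]; ring
  rw [hrepr] at h
  rcases coeffs_cases_of_mul_sub_mul_mem_Ioc hs ht h with ⟨hu, hv⟩ | ⟨hu, hv⟩ | ⟨hu, hv⟩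
  · left; rw [hk, hm, hu, hv]; constructor <;> ring
  · right; left; rw [hk]; nlinarith
  · right; right; rw [hk]; nlinarith

lemma add_le_or_le_neg_of_mem_Ioo {α : ℝ} {a b c d : ℤ} (hdet : b * c - a * d = 1)
    (hb : 0 ≤ b) (hd : 0 ≤ d) (hs : 0 < b * α - a) (ht : 0 < c - d * α) {k m : ℤ}
    (h : k * α - m ∈ Set.Ioo 0 (b * α - a)) :
    b + d ≤ k ∨ k ≤ -d := by
  rcases eq_or_add_le_or_le_neg_of_mem_Ioc hdet hb hd hs ht (Set.Ioo_subset_Ioc_self h) with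
    ⟨rfl, rfl⟩ | hk | hk
  · exact absurd h.2 (lt_irrefl _)
  · exact Or.inl hk
  · exact Or.inr hk

theorem successor_small_interval_general
    (n : ℕ) (α : ℝ)
    (a b c d : ℤ)
    (hdet : b * c - a * d = 1) (hd : d ≤ (n : ℤ))
    (hbd : (n : ℤ) + 1 ≤ b + d)
    (hl : (a : ℝ) / (b : ℝ) < α) (hr : α < (c : ℝ) / (d : ℝ)) :
    let s : ℝ := (b : ℝ) * α - (a : ℝ)
    ∀ i : ℕ, (i : ℤ) ≤ (n : ℤ) - b →
      Int.fract (((i : ℝ) + (b : ℝ)) * α) = Int.fract ((i : ℝ) * α) + s ∧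
      ¬ ∃ j : ℕ, j ≤ n ∧ Int.fract ((i : ℝ) * α) < Int.fract ((j : ℝ) * α) ∧
          Int.fract ((j : ℝ) * α) < Int.fract (((i : ℝ) + (b : ℝ)) * α) := by
  intro s i hi
  have hb0 : 0 < b := by omega
  have hd0 : 0 < d := by omega
  have hs : 0 < s := by
    rw [div_lt_iff₀ (by exact_mod_cast hb0)] at hl; linarith
  have ht : 0 < c - d * α := by
    rw [lt_div_iff₀ (by exact_mod_cast hd0)] at hr; linarith
  have hfr_i := Int.floor_add_fract ((i : ℝ) * α)
  have hno_wrap : Int.fract ((i : ℝ) * α) + s < 1 := by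
    by_contra! hwrap
    have hk := eq_or_add_le_or_le_neg_of_mem_Ioc hdet hb0.le hd0.le hs ht
      (k := -i) (m := -⌊(i : ℝ) * α⌋ - 1)
      ⟨by push_cast; linarith [Int.fract_lt_one ((i : ℝ) * α)], by push_cast; linarith⟩
    omega
  have hstep : Int.fract (((i : ℝ) + b) * α) = Int.fract ((i : ℝ) * α) + s :=
    Int.fract_eq_iff.mpr ⟨by linarith [Int.fract_nonneg ((i : ℝ) * α)], hno_wrap,
      ⌊(i : ℝ) * α⌋ + a, by push_cast; linarith⟩
  refine ⟨hstep, ?_⟩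
  rintro ⟨j, hjn, hij, hji⟩
  rw [hstep] at hji
  have hfr_j := Int.floor_add_fract ((j : ℝ) * α)
  have hk := add_le_or_le_neg_of_mem_Ioo hdet hb0.le hd0.le hs ht
    (k := j - i) (m := ⌊(j : ℝ) * α⌋ - ⌊(i : ℝ) * α⌋)
    ⟨by push_cast; linarith, by push_cast; linarith⟩
  omega

/-- In the Farey-pair setting, for `0 ≤ i ≤ n - b` we have `{(i+b)α} = {iα} + s`,
and `{(i+b)α}` is the immediate successor of `{iα}` among the points `{jα}`,
`0 ≤ j ≤ n`. -/
theorem successor_small_interval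
    (n : ℕ) (hn : 0 < n) (α : ℝ) (hα : α ∈ Set.Ioo (0 : ℝ) 1)
    (hirr : ¬ ∃ p q : ℤ, 0 < q ∧ q ≤ (n : ℤ) ∧ α = (p : ℝ) / (q : ℝ))
    (a b c d : ℤ) (ha : 0 ≤ a) (hab : a < b) (hc : 0 < c) (hcd : c ≤ d)
    (hdet : b * c - a * d = 1) (hb : b ≤ (n : ℤ)) (hd : d ≤ (n : ℤ))
    (hbd : (n : ℤ) + 1 ≤ b + d)
    (hl : (a : ℝ) / (b : ℝ) < α) (hr : α < (c : ℝ) / (d : ℝ)) :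
    let s : ℝ := (b : ℝ) * α - (a : ℝ)
    ∀ i : ℕ, (i : ℤ) ≤ (n : ℤ) - b →
      Int.fract (((i : ℝ) + (b : ℝ)) * α) = Int.fract ((i : ℝ) * α) + s ∧
      ¬ ∃ j : ℕ, j ≤ n ∧ Int.fract ((i : ℝ) * α) < Int.fract ((j : ℝ) * α) ∧
          Int.fract ((j : ℝ) * α) < Int.fract (((i : ℝ) + (b : ℝ)) * α) :=
  successor_small_interval_general n α a b c d hdet hd hbd hl hr
end

section
/- In the Farey-pair setting, for every integer i with n − b < i < d one has {(i+b−d)α} = {iα} + s + t, and {(i+b−d)α} is the immediate successor of {iα} in the set { {jα} : 0 ≤ j ≤ n }, i.e., no j with 0 ≤ j ≤ n satisfies {iα} < {jα} < {(i+b−d)α}. -/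
/-! Since `bc - ad = 1`, every integer pair `(m, M)` is `p • (b, a) + q • (d, c)`, so
`mα - M = p s - q t`. If this lies in `(0, s + t]` then either `p ≥ 1, q ≥ 0` (so `m ≥ b`),
or `p ≤ 0, q ≤ -1` (so `m ≤ -d`), or `p = 1, q = -1` (so `m = b - d` and `mα - M = s + t`).
For `n - b < i < d`, taking `m = -i`, `M = -⌊iα⌋ - 1` (so `mα - M = 1 - {iα}`) shows
`{iα} + s + t < 1`, which gives the formula for `{(i+b-d)α}`; taking `m = j - i`,
`M = ⌊jα⌋ - ⌊iα⌋` leaves no room for a point `{jα}` with `0 ≤ j ≤ n` strictly between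
`{iα}` and `{iα} + s + t`. -/

lemma int_combination_cases {s t : ℝ} (hs : 0 < s) (ht : 0 < t) {p q : ℤ}
    (hpos : 0 < p * s - q * t) (hle : p * s - q * t ≤ s + t) :
    (1 ≤ p ∧ 0 ≤ q) ∨ (p ≤ 0 ∧ q ≤ -1) ∨ (p = 1 ∧ q = -1) := by
  rcases le_or_gt 0 q with hq | hq
  · refine Or.inl ⟨?_, hq⟩
    by_contra! hp
    have hp' : (p : ℝ) ≤ 0 := by exact_mod_cast Int.lt_add_one_iff.mp hp
    have hq' : (0 : ℝ) ≤ q := by exact_mod_cast hq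
    nlinarith
  rcases le_or_gt p 0 with hp | hp
  · exact Or.inr (Or.inl ⟨hp, by omega⟩)
  have hp' : (1 : ℝ) ≤ p := by exact_mod_cast hp
  have hq' : (q : ℝ) ≤ -1 := by exact_mod_cast (show q ≤ -1 by omega)
  have hp1 : (p : ℝ) ≤ 1 := by nlinarith
  have hq1 : (-1 : ℝ) ≤ q := by nlinarith
  exact Or.inr (Or.inr ⟨by exact_mod_cast le_antisymm hp1 hp',
    by exact_mod_cast le_antisymm hq' hq1⟩)

lemma farey_step_cases {α : ℝ} {a b c d : ℤ} (hdet : b * c - a * d = 1) (hb : 0 < b)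
    (hd : 0 < d) (hs : 0 < b * α - a) (ht : 0 < c - d * α) (m M : ℤ)
    (hpos : 0 < m * α - M) (hle : m * α - M ≤ (b * α - a) + (c - d * α)) :
    b ≤ m ∨ m ≤ -d ∨ (m = b - d ∧ m * α - M = (b * α - a) + (c - d * α)) := by
  obtain ⟨p, q, rfl, rfl⟩ : ∃ p q : ℤ, m = p * b + q * d ∧ M = p * a + q * c :=
    ⟨m * c - M * d, M * b - m * a, by linear_combination (-m) * hdet,
      by linear_combination (-M) * hdet⟩
  have hcomb : ((p * b + q * d : ℤ) : ℝ) * α - (p * a + q * c : ℤ) =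
      p * (b * α - a) - q * (c - d * α) := by
    push_cast; ring
  rw [hcomb] at hpos hle ⊢
  rcases int_combination_cases hs ht hpos hle with ⟨hp, hq⟩ | ⟨hp, hq⟩ | ⟨rfl, rfl⟩
  · exact Or.inl (by nlinarith)
  · exact Or.inr (Or.inl (by nlinarith))
  · exact Or.inr (Or.inr ⟨by ring, by push_cast; ring⟩)

theorem successor_trapezoid_interval_general
    (n : ℕ) (α : ℝ)
    (a b c d : ℤ) (ha : 0 ≤ a) (hab : a < b) (hc : 0 < c) (hcd : c ≤ d)
    (hdet : b * c - a * d = 1) (hd : d ≤ (n : ℤ))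
    (hl : (a : ℝ) / (b : ℝ) < α) (hr : α < (c : ℝ) / (d : ℝ)) :
    let s : ℝ := (b : ℝ) * α - (a : ℝ)
    let t : ℝ := (c : ℝ) - (d : ℝ) * α
    ∀ i : ℕ, (n : ℤ) - b < (i : ℤ) → (i : ℤ) < d →
      Int.fract (((i : ℝ) + (b : ℝ) - (d : ℝ)) * α) = Int.fract ((i : ℝ) * α) + s + t ∧
      ¬ ∃ j : ℕ, j ≤ n ∧ Int.fract ((i : ℝ) * α) < Int.fract ((j : ℝ) * α) ∧
          Int.fract ((j : ℝ) * α) < Int.fract (((i : ℝ) + (b : ℝ) - (d : ℝ)) * α) := by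
  intro s t i hni hid
  have hb : 0 < b := ha.trans_lt hab
  have hd0 : 0 < d := hc.trans_le hcd
  have hs : 0 < s := sub_pos.mpr ((div_lt_iff₀' (by exact_mod_cast hb)).mp hl)
  have ht : 0 < t := sub_pos.mpr ((lt_div_iff₀' (by exact_mod_cast hd0)).mp hr)
  have hstep := farey_step_cases hdet hb hd0 hs ht
  have hfi := Int.self_sub_floor ((i : ℝ) * α)
  have hlt : Int.fract ((i : ℝ) * α) + s + t < 1 := by
    by_contra! h
    rcases hstep (-i) (-⌊(i : ℝ) * α⌋ - 1)
      (by push_cast; linarith [Int.fract_lt_one ((i : ℝ) * α)]) (by push_cast; linarith)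
      with h | h | ⟨h, -⟩ <;> omega
  have hsucc : Int.fract (((i : ℝ) + b - d) * α) = Int.fract ((i : ℝ) * α) + s + t := by
    refine Int.fract_eq_iff.mpr ⟨by linarith [Int.fract_nonneg ((i : ℝ) * α)], hlt,
      ⌊(i : ℝ) * α⌋ + a - c, ?_⟩
    rw [← hfi]; push_cast; ring
  refine ⟨hsucc, fun ⟨j, hjn, hij, hji⟩ => ?_⟩
  have hfj := Int.self_sub_floor ((j : ℝ) * α)
  rw [hsucc] at hji
  rcases hstep (j - i) (⌊(j : ℝ) * α⌋ - ⌊(i : ℝ) * α⌋) (by push_cast; linarith)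
    (by push_cast; linarith) with h | h | ⟨-, h⟩
  · omega
  · omega
  · push_cast at h; linarith

/-- In the Farey-pair setting, for `n - b < i < d` we have
`{(i+b-d)α} = {iα} + s + t`, and `{(i+b-d)α}` is the immediate successor of
`{iα}` among the points `{jα}`, `0 ≤ j ≤ n`. -/
theorem successor_trapezoid_interval
    (n : ℕ) (hn : 0 < n) (α : ℝ) (hα : α ∈ Set.Ioo (0 : ℝ) 1)
    (hirr : ¬ ∃ p q : ℤ, 0 < q ∧ q ≤ (n : ℤ) ∧ α = (p : ℝ) / (q : ℝ))
    (a b c d : ℤ) (ha : 0 ≤ a) (hab : a < b) (hc : 0 < c) (hcd : c ≤ d)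
    (hdet : b * c - a * d = 1) (hb : b ≤ (n : ℤ)) (hd : d ≤ (n : ℤ))
    (hbd : (n : ℤ) + 1 ≤ b + d)
    (hl : (a : ℝ) / (b : ℝ) < α) (hr : α < (c : ℝ) / (d : ℝ)) :
    let s : ℝ := (b : ℝ) * α - (a : ℝ)
    let t : ℝ := (c : ℝ) - (d : ℝ) * α
    ∀ i : ℕ, (n : ℤ) - b < (i : ℤ) → (i : ℤ) < d →
      Int.fract (((i : ℝ) + (b : ℝ) - (d : ℝ)) * α) = Int.fract ((i : ℝ) * α) + s + t ∧
      ¬ ∃ j : ℕ, j ≤ n ∧ Int.fract ((i : ℝ) * α) < Int.fract ((j : ℝ) * α) ∧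
          Int.fract ((j : ℝ) * α) < Int.fract (((i : ℝ) + (b : ℝ) - (d : ℝ)) * α) :=
  successor_trapezoid_interval_general n α a b c d ha hab hc hcd hdet hd hl hr
end

section
/- Let α ∈ (0,1) be irrational and β ∈ (0,1) with β ≥ max(α, 1 − α). Then for every natural number i with {iα} < β, the gap after i is equal to 1 or 2. -/
/-! If `{x + a} ≥ β`, then `x + a` did not wrap around (otherwise `{x + a} < {x} < β`), so
`{x} + a ≥ β ≥ 1 - a`; the next step by `a` therefore wraps around exactly once and lands
below `a ≤ β`. -/

lemma Int.fract_add_lt_or_fract_add_two_mul_lt {x a β : ℝ} (hx : Int.fract x < β)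
    (ha₀ : 0 ≤ a) (ha₁ : a < 1) (haβ : a ≤ β) (haβ' : 1 - a ≤ β) :
    Int.fract (x + a) < β ∨ Int.fract (x + 2 * a) < β := by
  have hx₀ := Int.fract_nonneg x
  have hx₁ := Int.fract_lt_one x
  have hx_eq : x = ⌊x⌋ + Int.fract x := (Int.floor_add_fract x).symm
  by_cases hwrap : 1 ≤ Int.fract x + a
  · left
    have : Int.fract (x + a) = Int.fract x + a - 1 :=
      Int.fract_eq_iff.2 ⟨by linarith, by linarith, ⌊x⌋ + 1, by push_cast; linarith⟩
    linarith
  · have hfa : Int.fract (x + a) = Int.fract x + a :=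
      Int.fract_eq_iff.2 ⟨by linarith, by linarith, ⌊x⌋, by linarith⟩
    rcases lt_or_ge (Int.fract (x + a)) β with h | h
    · exact Or.inl h
    · right
      have : Int.fract (x + 2 * a) = Int.fract x + 2 * a - 1 :=
        Int.fract_eq_iff.2 ⟨by linarith, by linarith, ⌊x⌋ + 1, by push_cast; linarith⟩
      linarith

lemma Nat.sInf_pos_eq_one_or_two {P : ℕ → Prop} (h : P 1 ∨ P 2) :
    sInf {e | 0 < e ∧ P e} = 1 ∨ sInf {e | 0 < e ∧ P e} = 2 := by
  obtain ⟨n, hn, hPn⟩ : ∃ n, (n = 1 ∨ n = 2) ∧ P n :=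
    h.elim (⟨1, Or.inl rfl, ·⟩) (⟨2, Or.inr rfl, ·⟩)
  have hmem : n ∈ {e | 0 < e ∧ P e} := ⟨by omega, hPn⟩
  have hle := Nat.sInf_le hmem
  have hpos := (Nat.sInf_mem ⟨n, hmem⟩).1
  omega

theorem three_gap_case_one_general
    (α β : ℝ) (hα : α ∈ Set.Ioo (0 : ℝ) 1)
    (hβmax : max α (1 - α) ≤ β) :
    let gap : ℕ → ℕ := fun i => sInf {e : ℕ | 0 < e ∧ Int.fract (((i : ℝ) + (e : ℝ)) * α) < β}
    ∀ i : ℕ, Int.fract ((i : ℝ) * α) < β → gap i = 1 ∨ gap i = 2 := by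
  intro gap i hi
  apply Nat.sInf_pos_eq_one_or_two
  simp only [Nat.cast_one, Nat.cast_ofNat, add_mul, one_mul]
  exact Int.fract_add_lt_or_fract_add_two_mul_lt hi hα.1.le hα.2
    (le_of_max_le_left hβmax) (le_of_max_le_right hβmax)

/-- **Three gap theorem, case 1** (qualitative). If `α ∈ (0,1)` is irrational,
`β ∈ (0,1)` and `β ≥ max(α, 1-α)`, then for every `i` with `{iα} < β` the gap
after `i` (the least positive `e` with `{(i+e)α} < β`) is `1` or `2`. -/
theorem three_gap_case_one
    (α β : ℝ) (hα : α ∈ Set.Ioo (0 : ℝ) 1) (hirr : Irrational α)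
    (hβ : β ∈ Set.Ioo (0 : ℝ) 1) (hβmax : max α (1 - α) ≤ β) :
    let gap : ℕ → ℕ := fun i => sInf {e : ℕ | 0 < e ∧ Int.fract (((i : ℝ) + (e : ℝ)) * α) < β}
    ∀ i : ℕ, Int.fract ((i : ℝ) * α) < β → gap i = 1 ∨ gap i = 2 :=
  three_gap_case_one_general α β hα hβmax
end

section
/- Let α ∈ (0,1) be irrational and β ∈ (0,1) with β ≥ max(α, 1 − α). For every natural number i with {iα} < β: the gap after i equals 1 if and only if {iα} ∈ [0, β − α) ∪ [1 − α, β), and the gap after i equals 2 if and only if {iα} ∈ [β − α, 1 − α). -/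
/-!
Write `x = {iα}`, so that `{(i+e)α} = {x + eα}`. The gap is `1` exactly when `{x + α} < β`: below
`1 - α` this reads `x < β - α`, while from `1 - α` on `{x + α} = x + α - 1 < x < β` holds automatically.
If `x ∈ [β - α, 1 - α)` the point `x + α` lies in `[β, 1)`, and since `β ≥ 1 - α` the next step wraps
around: `{x + 2α} = x + 2α - 1 < α ≤ β`, so the gap is `2`.
-/

open Set

theorem Nat.sInf_setOf_pos_and_eq_succ_iff (P : ℕ → Prop) (n : ℕ) :
    sInf {e | 0 < e ∧ P e} = n + 1 ↔ P (n + 1) ∧ ∀ k, 0 < k → k ≤ n → ¬P k := by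
  constructor
  · intro h
    have hmem := h ▸ Nat.sInf_mem (Nat.nonempty_of_sInf_eq_succ h)
    refine ⟨hmem.2, fun k hk hkn hPk => ?_⟩
    have := Nat.sInf_le (show k ∈ {e | 0 < e ∧ P e} from ⟨hk, hPk⟩)
    omega
  · rintro ⟨hP, hmin⟩
    have hmem : n + 1 ∈ {e | 0 < e ∧ P e} := ⟨n.succ_pos, hP⟩
    have hinf := Nat.sInf_mem ⟨_, hmem⟩
    have := Nat.sInf_le hmem
    by_contra hne
    exact hmin _ hinf.1 (by omega) hinf.2

theorem Nat.sInf_setOf_pos_and_eq_one_iff (P : ℕ → Prop) :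
    sInf {e | 0 < e ∧ P e} = 1 ↔ P 1 := by
  rw [Nat.sInf_setOf_pos_and_eq_succ_iff P 0]
  exact ⟨And.left, fun h => ⟨h, fun k hk hk0 => absurd hk (by omega)⟩⟩

theorem Nat.sInf_setOf_pos_and_eq_two_iff (P : ℕ → Prop) :
    sInf {e | 0 < e ∧ P e} = 2 ↔ ¬P 1 ∧ P 2 := by
  rw [Nat.sInf_setOf_pos_and_eq_succ_iff P 1]
  constructor
  · rintro ⟨h2, hmin⟩
    exact ⟨hmin 1 one_pos le_rfl, h2⟩
  · rintro ⟨h1, h2⟩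
    refine ⟨h2, fun k hk hk1 => ?_⟩
    obtain rfl : k = 1 := by omega
    exact h1

theorem Int.fract_add_eq_fract_fract_add {R : Type*} [Ring R] [LinearOrder R] [IsOrderedRing R]
    [FloorRing R]
    (a b : R) : Int.fract (a + b) = Int.fract (Int.fract a + b) := by
  conv_lhs => rw [← Int.fract_add_floor a, add_right_comm, Int.fract_add_intCast]

theorem Int.fract_eq_sub_one {R : Type*} [Ring R] [LinearOrder R] [IsStrictOrderedRing R]
    [FloorRing R] {a : R} (h₁ : 1 ≤ a) (h₂ : a < 2) : Int.fract a = a - 1 := by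
  rw [← Int.fract_sub_one, Int.fract_eq_self]
  exact ⟨sub_nonneg.mpr h₁, sub_lt_iff_lt_add.mpr (by rwa [one_add_one_eq_two])⟩

section Rotation

variable {α β x : ℝ}

theorem fract_add_lt_iff (hα : α ∈ Ioo 0 1) (hx : x ∈ Ico 0 1) (hxβ : x < β) :
    Int.fract (x + α) < β ↔ x ∈ Ico 0 (β - α) ∪ Ico (1 - α) β := by
  obtain ⟨hα0, hα1⟩ := hα
  obtain ⟨hx0, hx1⟩ := hx
  simp only [mem_union, mem_Ico]
  rcases lt_or_ge (x + α) 1 with hwrap | hwrap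
  · rw [Int.fract_eq_self.mpr ⟨by linarith, hwrap⟩]
    constructor
    · intro h; left; constructor <;> linarith
    · rintro (⟨-, h⟩ | ⟨h, -⟩) <;> linarith
  · rw [Int.fract_eq_sub_one hwrap (by linarith)]
    exact ⟨fun _ => Or.inr ⟨by linarith, hxβ⟩, fun _ => by linarith⟩

theorem not_fract_add_lt_and_fract_add_two_mul_lt_iff (hα : α ∈ Ioo 0 1) (hx : x ∈ Ico 0 1)
    (hxβ : x < β) (hβ : max α (1 - α) ≤ β) :
    ¬Int.fract (x + α) < β ∧ Int.fract (x + 2 * α) < β ↔ x ∈ Ico (β - α) (1 - α) := by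
  obtain ⟨hα0, hα1⟩ := hα
  obtain ⟨hx0, hx1⟩ := hx
  obtain ⟨hαβ, h1αβ⟩ := max_le_iff.mp hβ
  rw [mem_Ico]
  constructor
  · rintro ⟨hnot, -⟩
    rcases lt_or_ge (x + α) 1 with hwrap | hwrap
    · rw [Int.fract_eq_self.mpr ⟨by linarith, hwrap⟩] at hnot
      constructor <;> linarith
    · rw [Int.fract_eq_sub_one hwrap (by linarith)] at hnot
      linarith
  · rintro ⟨hlo, hhi⟩
    rw [Int.fract_eq_self.mpr ⟨by linarith, by linarith⟩,
      Int.fract_eq_sub_one (by linarith) (by linarith)]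
    constructor <;> linarith

end Rotation

theorem three_gap_case_one_description_general
    (α β : ℝ) (hα : α ∈ Set.Ioo (0 : ℝ) 1)
    (hβmax : max α (1 - α) ≤ β) :
    let gap : ℕ → ℕ := fun i => sInf {e : ℕ | 0 < e ∧ Int.fract (((i : ℝ) + (e : ℝ)) * α) < β}
    ∀ i : ℕ, Int.fract ((i : ℝ) * α) < β →
      (gap i = 1 ↔ Int.fract ((i : ℝ) * α) ∈ Set.Ico (0 : ℝ) (β - α) ∪ Set.Ico (1 - α) β) ∧
      (gap i = 2 ↔ Int.fract ((i : ℝ) * α) ∈ Set.Ico (β - α) (1 - α)) := by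
  intro gap i hi
  have hshift (e : ℕ) :
      Int.fract (((i : ℝ) + e) * α) = Int.fract (Int.fract ((i : ℝ) * α) + e * α) := by
    rw [add_mul, Int.fract_add_eq_fract_fract_add]
  have hx : Int.fract ((i : ℝ) * α) ∈ Ico 0 1 := ⟨Int.fract_nonneg _, Int.fract_lt_one _⟩
  simp only [gap, hshift, Nat.sInf_setOf_pos_and_eq_one_iff, Nat.sInf_setOf_pos_and_eq_two_iff,
    Nat.cast_one, one_mul, Nat.cast_ofNat]
  exact ⟨fract_add_lt_iff hα hx hi, not_fract_add_lt_and_fract_add_two_mul_lt_iff hα hx hi hβmax⟩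

/-- **Three gap theorem, case 1**, precise description: for `{iα} < β`
(with `β ≥ max(α, 1-α)`), the gap after `i` is `1` iff
`{iα} ∈ [0, β-α) ∪ [1-α, β)`, and `2` iff `{iα} ∈ [β-α, 1-α)`. -/
theorem three_gap_case_one_description
    (α β : ℝ) (hα : α ∈ Set.Ioo (0 : ℝ) 1) (hirr : Irrational α)
    (hβ : β ∈ Set.Ioo (0 : ℝ) 1) (hβmax : max α (1 - α) ≤ β) :
    let gap : ℕ → ℕ := fun i => sInf {e : ℕ | 0 < e ∧ Int.fract (((i : ℝ) + (e : ℝ)) * α) < β}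
    ∀ i : ℕ, Int.fract ((i : ℝ) * α) < β →
      (gap i = 1 ↔ Int.fract ((i : ℝ) * α) ∈ Set.Ico (0 : ℝ) (β - α) ∪ Set.Ico (1 - α) β) ∧
      (gap i = 2 ↔ Int.fract ((i : ℝ) * α) ∈ Set.Ico (β - α) (1 - α)) :=
  three_gap_case_one_description_general α β hα hβmax
end

section
/- In the three-gap setting with β < max(α, 1 − α), for every natural number i with {iα} < β, the gap after i belongs to the set {b, d, b + d}. -/
/-!
Write `x = {iα}`, `s = {bα}` and `{dα} = 1 - t`. Modulo 1, moving from `i` to `i + b` adds `s`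
and moving to `i + d` subtracts `t`. The point `x + s` lies in `[0, β)` modulo 1 unless
`β ≤ x + s < 1`, and `x - t` does unless `x < t`; when both fail, `x + s - t` lies in `[0, β)`,
so one of `b`, `d`, `b + d` is a return time. Nothing shorter can be the first return: a return
time `e` with `b < e` and `{eα} < s` has `{(e - b)α} > 1 - β`, so `e - b ≥ d`; one with `d < e`
and `{eα} > {dα}` has `{(e - d)α} < β`, so `e - d ≥ b`.
-/

open Function

namespace Int

variable {R : Type*} [CommRing R] [LinearOrder R] [IsStrictOrderedRing R] [FloorRing R]

theorem fract_fract_add_fract (a b : R) : fract (fract a + fract b) = fract (a + b) :=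
  fract_eq_fract.2 ⟨-⌊a⌋ - ⌊b⌋, by simp only [fract]; push_cast; ring⟩

theorem fract_fract_add_fract_add_fract (a b c : R) :
    fract (fract a + fract b + fract c) = fract (a + b + c) :=
  fract_eq_fract.2 ⟨-⌊a⌋ - ⌊b⌋ - ⌊c⌋, by simp only [fract]; push_cast; ring⟩

theorem fract_fract_sub_fract (a b : R) : fract (fract a - fract b) = fract (a - b) :=
  fract_eq_fract.2 ⟨⌊b⌋ - ⌊a⌋, by simp only [fract]; push_cast; ring⟩

theorem fract_fract_mul_natCast (a : R) (n : ℕ) : fract (fract a * n) = fract (a * n) :=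
  fract_eq_fract.2 ⟨-⌊a⌋ * n, by simp only [fract]; push_cast; ring⟩

theorem fract_add_of_one_le {a b : R} (ha : a < 1) (hb : b < 1) (h : 1 ≤ a + b) :
    fract (a + b) = a + b - 1 := by
  rw [← fract_sub_one, fract_eq_self]
  constructor <;> linarith

theorem fract_sub_of_lt {a b : R} (ha : 0 ≤ a) (hb : b < 1) (h : a < b) :
    fract (a - b) = a - b + 1 := by
  rw [← fract_add_one, fract_eq_self]
  constructor <;> linarith

end Int

open Int (fract)

namespace Irrational

variable {α : ℝ}

theorem fract_natCast_mul_injective (h : Irrational α) :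
    Injective fun n : ℕ => fract (n * α) := by
  intro m n hmn
  by_contra hne
  obtain ⟨z, hz⟩ := Int.fract_eq_fract.1 hmn
  have hirr : Irrational (((m - n : ℤ) : ℝ) * α) :=
    h.intCast_mul (sub_ne_zero.2 (by exact_mod_cast hne))
  exact hirr.ne_int z (by push_cast; linarith)

theorem fract_natCast_mul_pos (h : Irrational α) {n : ℕ} (hn : 0 < n) : 0 < fract (n * α) := by
  refine (Int.fract_nonneg _).lt_of_ne' fun h0 => hn.ne' (h.fract_natCast_mul_injective ?_)
  simpa using h0

theorem fract_natCast_mul_neg (h : Irrational α) {n : ℕ} (hn : 0 < n) :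
    fract (n * -α) = 1 - fract (n * α) := by
  rw [mul_neg, Int.fract_neg (h.fract_natCast_mul_pos hn).ne']

end Irrational

theorem exists_fract_natCast_mul_lt_or_neg (α : ℝ) {ε : ℝ} (hε : 0 < ε) :
    ∃ n : ℕ, 0 < n ∧ (fract (n * α) < ε ∨ fract (n * -α) < ε) := by
  obtain ⟨N, hN⟩ := exists_nat_gt (1 / ε)
  have hN0 : 0 < N := by exact_mod_cast (one_div_pos.2 hε).trans hN
  obtain ⟨n, hn, -, hc⟩ := Real.exists_nat_abs_mul_sub_round_le α hN0
  have hNε : 1 / ((N : ℝ) + 1) < ε := by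
    rw [div_lt_iff₀ hε] at hN
    rw [div_lt_iff₀ (by positivity)]
    nlinarith
  have hN1 : 1 / ((N : ℝ) + 1) < 1 := by
    rw [div_lt_one (by positivity)]
    exact_mod_cast Nat.lt_succ_of_le hN0
  set c := n * α - round (n * α) with hc_def
  obtain ⟨hc1, hc2⟩ := abs_le.1 hc
  refine ⟨n, hn, ?_⟩
  rcases le_or_gt 0 c with h0 | h0
  · left
    rw [← Int.fract_sub_intCast _ (round (n * α)), ← hc_def, Int.fract_eq_self.2 ⟨h0, by linarith⟩]
    linarith
  · right
    have : n * -α = -c - round (n * α) := by rw [hc_def]; ring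
    rw [this, Int.fract_sub_intCast, Int.fract_eq_self.2 ⟨by linarith, by linarith⟩]
    linarith

theorem Irrational.exists_fract_natCast_mul_neg_lt {α β : ℝ} (h : Irrational α) (hβ : β ≤ 1)
    {n : ℕ} (hn : 0 < n) (hnβ : fract (n * α) < β) :
    ∃ m : ℕ, 0 < m ∧ fract (m * -α) < β := by
  set w := fract (n * α)
  have hw : 0 < w := h.fract_natCast_mul_pos hn
  -- `k` is the first multiple with `k * w > 1 - β`; since `w < β` it still has `k * w < 1`
  set k := ⌊(1 - β) / w⌋₊ + 1
  have hkw : 1 - β < k * w := by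
    have := Nat.lt_floor_add_one ((1 - β) / w)
    rw [div_lt_iff₀ hw] at this
    push_cast [k]
    linarith
  have hkw' : k * w < 1 := by
    have := Nat.floor_le (div_nonneg (sub_nonneg.2 hβ) hw.le)
    rw [le_div_iff₀ hw] at this
    push_cast [k]
    nlinarith
  have hk : fract ((k * n : ℕ) * α) = k * w := by
    rw [show ((k * n : ℕ) : ℝ) * α = n * α * k by push_cast; ring, ← Int.fract_fract_mul_natCast,
      mul_comm, Int.fract_eq_self.2 ⟨by positivity, hkw'⟩]
  have hkn : 0 < k * n := Nat.mul_pos (Nat.succ_pos _) hn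
  refine ⟨k * n, hkn, ?_⟩
  rw [h.fract_natCast_mul_neg hkn, hk]
  linarith

theorem Irrational.exists_fract_natCast_mul_lt {α β : ℝ} (h : Irrational α) (hβ0 : 0 < β)
    (hβ1 : β ≤ 1) : ∃ n : ℕ, 0 < n ∧ fract (n * α) < β := by
  obtain ⟨n, hn, hlt | hlt⟩ := exists_fract_natCast_mul_lt_or_neg α hβ0
  · exact ⟨n, hn, hlt⟩
  · simpa using h.neg.exists_fract_natCast_mul_neg_lt hβ1 hn hlt

namespace ThreeGap

-- `b`, `d` and the gap after `i` are the least elements of these three sets.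
def lowerHits (α β : ℝ) : Set ℕ := {m | 0 < m ∧ fract (m * α) < β}

def upperHits (α β : ℝ) : Set ℕ := {m | 0 < m ∧ 1 - β < fract (m * α)}

def hitsAfter (α β : ℝ) (i : ℕ) : Set ℕ := {e | 0 < e ∧ fract ((i + e) * α) < β}

variable {α β : ℝ} {b d : ℕ}

theorem lowerHits_nonempty (h : Irrational α) (hβ0 : 0 < β) (hβ1 : β ≤ 1) :
    (lowerHits α β).Nonempty :=
  h.exists_fract_natCast_mul_lt hβ0 hβ1

theorem upperHits_nonempty (h : Irrational α) (hβ0 : 0 < β) (hβ1 : β ≤ 1) :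
    (upperHits α β).Nonempty := by
  obtain ⟨m, hm, hlt⟩ := h.neg.exists_fract_natCast_mul_lt hβ0 hβ1
  rw [h.fract_natCast_mul_neg hm] at hlt
  exact ⟨m, hm, by linarith⟩

theorem fract_natCast_sub_mul {m n : ℕ} (hnm : n ≤ m) :
    fract (((m - n : ℕ) : ℝ) * α) = fract (fract (m * α) - fract (n * α)) := by
  rw [Int.fract_fract_sub_fract, Nat.cast_sub hnm, sub_mul]

theorem add_le_of_fract_lt (hb : IsLeast (lowerHits α β) b) (hd : IsLeast (upperHits α β) d)
    {m : ℕ} (hm : 0 < m) (hmb : fract (m * α) < fract (b * α)) : b + d ≤ m := by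
  obtain ⟨-, hbβ⟩ := hb.1
  have hbm : b < m := by
    refine (hb.2 ⟨hm, hmb.trans hbβ⟩).lt_of_ne ?_
    rintro rfl
    exact hmb.false
  have hd_le : d ≤ m - b := by
    refine hd.2 ⟨Nat.sub_pos_of_lt hbm, ?_⟩
    rw [fract_natCast_sub_mul hbm.le,
      Int.fract_sub_of_lt (Int.fract_nonneg _) (Int.fract_lt_one _) hmb]
    linarith [Int.fract_nonneg ((m : ℝ) * α)]
  omega

theorem add_le_of_lt_fract (hb : IsLeast (lowerHits α β) b) (hd : IsLeast (upperHits α β) d)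
    {m : ℕ} (hm : 0 < m) (hdm : fract (d * α) < fract (m * α)) : b + d ≤ m := by
  obtain ⟨-, hdβ⟩ := hd.1
  have hdm' : d < m := by
    refine (hd.2 ⟨hm, hdβ.trans hdm⟩).lt_of_ne ?_
    rintro rfl
    exact hdm.false
  have hb_le : b ≤ m - d := by
    refine hb.2 ⟨Nat.sub_pos_of_lt hdm', ?_⟩
    have hm1 := Int.fract_lt_one ((m : ℝ) * α)
    rw [fract_natCast_sub_mul hdm'.le, Int.fract_eq_self.2
      ⟨sub_nonneg.2 hdm.le, by linarith [Int.fract_nonneg ((d : ℝ) * α)]⟩]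
    linarith
  omega

theorem add_fract_mem_Ico_of_not_mem_hitsAfter {i e : ℕ} (hi : fract (i * α) < β) (he : 0 < e)
    (hne : e ∉ hitsAfter α β i) : fract (i * α) + fract (e * α) ∈ Set.Ico β 1 := by
  have hge : β ≤ fract (fract (i * α) + fract (e * α)) := by
    rw [Int.fract_fract_add_fract, ← add_mul]
    exact not_lt.1 fun hlt => hne ⟨he, hlt⟩
  have hlt : fract (i * α) + fract (e * α) < 1 := by
    by_contra! h1
    rw [Int.fract_add_of_one_le (Int.fract_lt_one _) (Int.fract_lt_one _) h1] at hge
    linarith [Int.fract_lt_one ((e : ℝ) * α)]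
  rw [Int.fract_eq_self.2 ⟨by positivity, hlt⟩] at hge
  exact ⟨hge, hlt⟩

theorem add_mem_hitsAfter (hb : IsLeast (lowerHits α β) b) (hd : IsLeast (upperHits α β) d)
    {i : ℕ} (hi : fract (i * α) < β) (hbi : b ∉ hitsAfter α β i) (hdi : d ∉ hitsAfter α β i) :
    b + d ∈ hitsAfter α β i := by
  obtain ⟨hb0, hbβ⟩ := hb.1
  obtain ⟨hd0, hdβ⟩ := hd.1
  have hxs := add_fract_mem_Ico_of_not_mem_hitsAfter hi hb0 hbi
  have hxd := add_fract_mem_Ico_of_not_mem_hitsAfter hi hd0 hdi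
  refine ⟨by omega, ?_⟩
  have hsum : fract ((i + (b + d : ℕ)) * α)
      = fract (i * α) + fract (b * α) + fract (d * α) - 1 := by
    rw [Nat.cast_add, ← add_assoc, add_mul, add_mul, ← Int.fract_fract_add_fract_add_fract,
      ← Int.fract_sub_one, Int.fract_eq_self]
    constructor <;> linarith [hxs.1, hxd.2, Int.fract_lt_one ((b : ℝ) * α)]
  rw [hsum]
  linarith [hxd.2]

theorem add_le_of_isLeast_hitsAfter (h : Irrational α) (hb : IsLeast (lowerHits α β) b)
    (hd : IsLeast (upperHits α β) d) {i E : ℕ} (hi : fract (i * α) < β)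
    (hE : IsLeast (hitsAfter α β i) E) (hEb : E ≠ b) (hEd : E ≠ d) : b + d ≤ E := by
  obtain ⟨⟨hE0, hyβ⟩, hEmin⟩ := hE
  have hEfract : fract (E * α) = fract (fract ((i + E) * α) - fract (i * α)) := by
    rw [Int.fract_fract_sub_fract, add_mul, add_sub_cancel_left]
  have hxy : fract (i * α) ≠ fract ((i + E) * α) := fun heq => hE0.ne' <| by
    have := h.fract_natCast_mul_injective (a₁ := i) (a₂ := i + E) (by push_cast; exact heq)
    omega
  have not_mem_of_lt {m : ℕ} (hmE : m < E) : m ∉ hitsAfter α β i :=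
    fun hm => (hEmin hm).not_gt hmE
  have hx0 := Int.fract_nonneg ((i : ℝ) * α)
  have hy0 := Int.fract_nonneg ((i + E : ℝ) * α)
  have hy1 := Int.fract_lt_one ((i + E : ℝ) * α)
  rcases hxy.lt_or_gt with hxy | hyx
  · -- the orbit moved forward by less than `β`, so `b ≤ E`
    rw [(Int.fract_eq_self (a := _ - _)).2 ⟨by linarith, by linarith⟩] at hEfract
    have hbE : b < E := (hb.2 ⟨hE0, by linarith⟩).lt_of_ne hEb.symm
    have hxs := add_fract_mem_Ico_of_not_mem_hitsAfter hi hb.1.1 (not_mem_of_lt hbE)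
    exact add_le_of_fract_lt hb hd hE0 (by linarith [hxs.1])
  · -- the orbit moved backward by less than `β`, so `d ≤ E`
    rw [Int.fract_sub_of_lt hy0 (Int.fract_lt_one _) hyx] at hEfract
    have hdE : d < E := (hd.2 ⟨hE0, by linarith⟩).lt_of_ne hEd.symm
    have hxd := add_fract_mem_Ico_of_not_mem_hitsAfter hi hd.1.1 (not_mem_of_lt hdE)
    exact add_le_of_lt_fract hb hd hE0 (by linarith [hxd.2])

theorem sInf_hitsAfter_mem (h : Irrational α) (hb : IsLeast (lowerHits α β) b)
    (hd : IsLeast (upperHits α β) d) {i : ℕ} (hi : fract (i * α) < β) :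
    sInf (hitsAfter α β i) = b ∨ sInf (hitsAfter α β i) = d ∨
      sInf (hitsAfter α β i) = b + d := by
  have hne : (hitsAfter α β i).Nonempty := by
    by_cases hbi : b ∈ hitsAfter α β i
    · exact ⟨b, hbi⟩
    by_cases hdi : d ∈ hitsAfter α β i
    · exact ⟨d, hdi⟩
    exact ⟨b + d, add_mem_hitsAfter hb hd hi hbi hdi⟩
  set E := sInf (hitsAfter α β i)
  have hE : IsLeast (hitsAfter α β i) E := isLeast_csInf hne
  by_cases hEb : E = b
  · exact Or.inl hEb
  by_cases hEd : E = d
  · exact Or.inr (Or.inl hEd)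
  have hle := add_le_of_isLeast_hitsAfter h hb hd hi hE hEb hEd
  have hbi : b ∉ hitsAfter α β i := fun hbi => by have := hE.2 hbi; have := hd.1.1; omega
  have hdi : d ∉ hitsAfter α β i := fun hdi => by have := hE.2 hdi; have := hb.1.1; omega
  exact Or.inr (Or.inr (le_antisymm (hE.2 (add_mem_hitsAfter hb hd hi hbi hdi)) hle))

end ThreeGap

theorem three_gap_case_two_general
    (α β : ℝ) (hirr : Irrational α)
    (hβ : β ∈ Set.Ioo (0 : ℝ) 1) :
    let gap : ℕ → ℕ := fun i => sInf {e : ℕ | 0 < e ∧ Int.fract (((i : ℝ) + (e : ℝ)) * α) < β}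
    let b : ℕ := sInf {m : ℕ | 0 < m ∧ Int.fract ((m : ℝ) * α) < β}
    let d : ℕ := sInf {m : ℕ | 0 < m ∧ 1 - β < Int.fract ((m : ℝ) * α)}
    ∀ i : ℕ, Int.fract ((i : ℝ) * α) < β →
      gap i = b ∨ gap i = d ∨ gap i = b + d := by
  intro gap b d i hi
  have hb : IsLeast (ThreeGap.lowerHits α β) b :=
    isLeast_csInf (ThreeGap.lowerHits_nonempty hirr hβ.1 hβ.2.le)
  have hd : IsLeast (ThreeGap.upperHits α β) d :=
    isLeast_csInf (ThreeGap.upperHits_nonempty hirr hβ.1 hβ.2.le)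
  exact ThreeGap.sInf_hitsAfter_mem hirr hb hd hi

/-- **Three gap theorem, case 2** (qualitative). If `α ∈ (0,1)` is irrational,
`β ∈ (0,1)` with `β < max(α, 1-α)`, `b` is the least positive integer with
`{bα} < β` and `d` the least positive integer with `{dα} > 1-β`, then every gap
belongs to `{b, d, b+d}`. -/
theorem three_gap_case_two
    (α β : ℝ) (hα : α ∈ Set.Ioo (0 : ℝ) 1) (hirr : Irrational α)
    (hβ : β ∈ Set.Ioo (0 : ℝ) 1) (hβmax : β < max α (1 - α)) :
    let gap : ℕ → ℕ := fun i => sInf {e : ℕ | 0 < e ∧ Int.fract (((i : ℝ) + (e : ℝ)) * α) < β}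
    let b : ℕ := sInf {m : ℕ | 0 < m ∧ Int.fract ((m : ℝ) * α) < β}
    let d : ℕ := sInf {m : ℕ | 0 < m ∧ 1 - β < Int.fract ((m : ℝ) * α)}
    ∀ i : ℕ, Int.fract ((i : ℝ) * α) < β →
      gap i = b ∨ gap i = d ∨ gap i = b + d :=
  three_gap_case_two_general α β hirr hβ
end

section
/- In the three-gap setting with β < max(α, 1 − α), if i is a natural number with {iα} ∈ [0, β − s), then the gap after i equals b. -/
/-!
If `0 < e < b`, minimality of `b` gives `{eα} ≥ β` and `{(b - e)α} ≥ β`; as these two sum to at most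
`{bα} + 1 = s + 1`, we get `{eα} ≤ s + 1 - β`, so adding `{iα} < β - s` does not wrap around and
`{(i + e)α} = {iα} + {eα} ≥ β`. On the other hand `{(i + b)α} ≤ {iα} + s < β`.
-/

namespace Int

variable {R : Type*} [CommRing R] [LinearOrder R] [IsStrictOrderedRing R] [FloorRing R]

theorem fract_add_eq_of_fract_add_fract_lt_one {a b : R} (h : fract a + fract b < 1) :
    fract (a + b) = fract a + fract b :=
  fract_eq_iff.2 ⟨add_nonneg (fract_nonneg a) (fract_nonneg b), h, ⌊a⌋ + ⌊b⌋, by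
    rw [fract, fract]; push_cast; ring⟩

theorem le_fract_add_of_le_fract {β a c d : R} (hc : β ≤ fract c) (hd : β ≤ fract d)
    (ha : fract a + fract (c + d) < β) : β ≤ fract (a + c) := by
  have hac : fract a + fract c < 1 := by linarith [fract_add_fract_le c d]
  rw [fract_add_eq_of_fract_add_fract_lt_one hac]
  linarith [fract_nonneg a]

end Int

theorem le_fract_add_mul_of_lt {α β : ℝ} {i b e : ℕ}
    (hmin : ∀ m : ℕ, 0 < m → m < b → β ≤ Int.fract ((m : ℝ) * α))
    (hi : Int.fract ((i : ℝ) * α) + Int.fract ((b : ℝ) * α) < β) (he : 0 < e) (heb : e < b) :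
    β ≤ Int.fract (((i : ℝ) + e) * α) := by
  have hsplit : (e : ℝ) * α + ((b - e : ℕ) : ℝ) * α = b * α := by
    rw [Nat.cast_sub heb.le]; ring
  rw [add_mul]
  exact Int.le_fract_add_of_le_fract (hmin e he heb) (hmin (b - e) (by omega) (by omega))
    (by rwa [hsplit])

theorem three_gap_small_gap_general
    (α β : ℝ) :
    let gap : ℕ → ℕ := fun i => sInf {e : ℕ | 0 < e ∧ Int.fract (((i : ℝ) + (e : ℝ)) * α) < β}
    let b : ℕ := sInf {m : ℕ | 0 < m ∧ Int.fract ((m : ℝ) * α) < β}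
    let s : ℝ := Int.fract ((b : ℝ) * α)
    ∀ i : ℕ, Int.fract ((i : ℝ) * α) ∈ Set.Ico (0 : ℝ) (β - s) → gap i = b := by
  intro gap b s i hi
  have hi : Int.fract ((i : ℝ) * α) + s < β := by linarith [hi.2]
  by_cases hB : ∃ m : ℕ, 0 < m ∧ Int.fract ((m : ℝ) * α) < β
  · obtain ⟨hb0, -⟩ : 0 < b ∧ _ := Nat.sInf_mem hB
    have hbG : 0 < b ∧ Int.fract (((i : ℝ) + b) * α) < β :=
      ⟨hb0, by rw [add_mul]; exact (Int.fract_add_le _ _).trans_lt hi⟩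
    refine le_antisymm (Nat.sInf_le hbG) (le_csInf ⟨b, hbG⟩ fun e ⟨he, heβ⟩ => ?_)
    by_contra! heb
    refine (le_fract_add_mul_of_lt (fun m hm hmb => ?_) hi he heb).not_gt heβ
    exact not_lt.1 fun h => Nat.notMem_of_lt_sInf hmb ⟨hm, h⟩
  · -- with no `b` there is no gap either, and both infima are the junk value `0`
    have hG : ∀ e : ℕ, ¬(0 < e ∧ Int.fract (((i : ℝ) + e) * α) < β) := fun e ⟨he, heβ⟩ =>
      hB ⟨i + e, by omega, by exact_mod_cast heβ⟩
    simp only [gap, b, not_exists.1 hB, hG, Set.ofPred_false, Nat.sInf_empty]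

/-- In the three-gap setting with `β < max(α, 1-α)`: if `{iα} ∈ [0, β - s)`,
then the gap after `i` equals `b`. -/
theorem three_gap_small_gap
    (α β : ℝ) (hα : α ∈ Set.Ioo (0 : ℝ) 1) (hirr : Irrational α)
    (hβ : β ∈ Set.Ioo (0 : ℝ) 1) (hβmax : β < max α (1 - α)) :
    let gap : ℕ → ℕ := fun i => sInf {e : ℕ | 0 < e ∧ Int.fract (((i : ℝ) + (e : ℝ)) * α) < β}
    let b : ℕ := sInf {m : ℕ | 0 < m ∧ Int.fract ((m : ℝ) * α) < β}
    let s : ℝ := Int.fract ((b : ℝ) * α)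
    ∀ i : ℕ, Int.fract ((i : ℝ) * α) ∈ Set.Ico (0 : ℝ) (β - s) → gap i = b :=
  three_gap_small_gap_general α β
end

section
/- In the three-gap setting with β < max(α, 1 − α), if i is a natural number with {iα} ∈ [t, β), then the gap after i equals d. -/
/-!
Write `x = {iα}` and `y = {dα}`, so that `1 ≤ x + y`. Then `{(i + d)α} = x + y - 1 < x < β`, so
the gap after `i` is at most `d`. If some `0 < e < d` had `{(i + e)α} < β`, minimality of `d`
would give `{eα} ≤ 1 - β`, hence `x + {eα} < 1` and `{eα} < β - x ≤ y - (1 - β)`. Then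
`{(d - e)α} = y - {eα} > 1 - β`, contradicting the minimality of `d`.
-/

open Set Int

namespace Int

variable {R : Type*} [CommRing R] [LinearOrder R] [IsStrictOrderedRing R] [FloorRing R] {a b c β : R}

theorem fract_add_eq_of_lt_one (h : fract a + fract b < 1) :
    fract (a + b) = fract a + fract b :=
  fract_eq_iff.2 ⟨add_nonneg (fract_nonneg a) (fract_nonneg b), h, ⌊a⌋ + ⌊b⌋, by
    simp only [fract]; push_cast; abel⟩

theorem fract_add_eq_sub_one_of_one_le (h : 1 ≤ fract a + fract b) :
    fract (a + b) = fract a + fract b - 1 :=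
  fract_eq_iff.2 ⟨sub_nonneg.2 h, by linarith [fract_lt_one a, fract_lt_one b],
    ⌊a⌋ + ⌊b⌋ + 1, by simp only [fract]; push_cast; abel⟩

theorem fract_sub_eq_of_le (h : fract b ≤ fract a) : fract (a - b) = fract a - fract b :=
  fract_eq_iff.2 ⟨sub_nonneg.2 h, by linarith [fract_lt_one a, fract_nonneg b],
    ⌊a⌋ - ⌊b⌋, by simp only [fract]; push_cast; abel⟩

theorem fract_add_lt_of_one_sub_fract_le (hab : 1 - fract b ≤ fract a) (ha : fract a < β) :
    fract (a + b) < β := by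
  rw [fract_add_eq_sub_one_of_one_le (by linarith)]
  linarith [fract_lt_one b]

theorem one_sub_lt_fract_sub (hab : 1 - fract b ≤ fract a) (ha : fract a < β)
    (hc : fract c ≤ 1 - β) (hac : fract (a + c) < β) : 1 - β < fract (b - c) := by
  rw [fract_add_eq_of_lt_one (by linarith)] at hac
  rw [fract_sub_eq_of_le (by linarith)]
  linarith

end Int

theorem isLeast_gap_of_mem_Ico {R : Type*} [CommRing R] [LinearOrder R] [IsStrictOrderedRing R]
    [FloorRing R] {α β : R} {d i : ℕ}
    (hd : IsLeast {m : ℕ | 0 < m ∧ 1 - β < fract ((m : R) * α)} d)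
    (hi : fract ((i : R) * α) ∈ Ico (1 - fract ((d : R) * α)) β) :
    IsLeast {e : ℕ | 0 < e ∧ fract (((i : R) + e) * α) < β} d := by
  refine ⟨⟨hd.1.1, by rw [add_mul]; exact fract_add_lt_of_one_sub_fract_le hi.1 hi.2⟩, ?_⟩
  rintro e ⟨he, hgap⟩
  by_contra! hed
  have hfe : fract ((e : R) * α) ≤ 1 - β := not_lt.1 fun h => hed.not_ge (hd.2 ⟨he, h⟩)
  have hde : 1 - β < fract (((d - e : ℕ) : R) * α) := by
    rw [Nat.cast_sub hed.le, sub_mul]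
    exact one_sub_lt_fract_sub hi.1 hi.2 hfe (by rwa [← add_mul])
  have := hd.2 ⟨Nat.sub_pos_of_lt hed, hde⟩
  omega

theorem three_gap_other_gap_general
    (α β : ℝ) :
    let gap : ℕ → ℕ := fun i => sInf {e : ℕ | 0 < e ∧ Int.fract (((i : ℝ) + (e : ℝ)) * α) < β}
    let d : ℕ := sInf {m : ℕ | 0 < m ∧ 1 - β < Int.fract ((m : ℝ) * α)}
    let t : ℝ := 1 - Int.fract ((d : ℝ) * α)
    ∀ i : ℕ, Int.fract ((i : ℝ) * α) ∈ Set.Ico t β → gap i = d := by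
  intro gap d t i hi
  obtain ⟨m, hm⟩ : {m : ℕ | 0 < m ∧ 1 - β < fract ((m : ℝ) * α)}.Nonempty := by
    -- otherwise `d = sInf ∅ = 0` and `t = 1`, which no fractional part reaches
    by_contra hempty
    have ht : t = 1 := by simp [t, d, not_nonempty_iff_eq_empty.1 hempty]
    exact (fract_lt_one _).not_ge (ht ▸ hi.1)
  have hd : IsLeast {m : ℕ | 0 < m ∧ 1 - β < fract ((m : ℝ) * α)} d :=
    ⟨Nat.sInf_mem ⟨m, hm⟩, fun _ => Nat.sInf_le⟩
  exact (isLeast_gap_of_mem_Ico hd hi).csInf_eq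

/-- In the three-gap setting with `β < max(α, 1-α)`: if `{iα} ∈ [t, β)`,
then the gap after `i` equals `d`. -/
theorem three_gap_other_gap
    (α β : ℝ) (hα : α ∈ Set.Ioo (0 : ℝ) 1) (hirr : Irrational α)
    (hβ : β ∈ Set.Ioo (0 : ℝ) 1) (hβmax : β < max α (1 - α)) :
    let gap : ℕ → ℕ := fun i => sInf {e : ℕ | 0 < e ∧ Int.fract (((i : ℝ) + (e : ℝ)) * α) < β}
    let d : ℕ := sInf {m : ℕ | 0 < m ∧ 1 - β < Int.fract ((m : ℝ) * α)}
    let t : ℝ := 1 - Int.fract ((d : ℝ) * α)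
    ∀ i : ℕ, Int.fract ((i : ℝ) * α) ∈ Set.Ico t β → gap i = d :=
  three_gap_other_gap_general α β
end

section
/- In the three-gap setting with β < max(α, 1 − α), as N → ∞: (1/N)·#{ i ∈ {0,…,N−1} : {iα} < β and the gap after i equals b } tends to β − s; (1/N)·#{ i ∈ {0,…,N−1} : {iα} < β and the gap after i equals d } tends to β − t; and (1/N)·#{ i ∈ {0,…,N−1} : {iα} < β and the gap after i equals b + d } tends to s + t − β. -/
/-!
Write `x n = {nα}`. By minimality of `b` and `d`, every `0 < e < b + d` with `x e < β` has
`x e ≥ s`, and every such `e` with `x e > 1 - β` has `x e ≤ 1 - t`. As `x (i + e)` is `x i + x e`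
up to one wrap-around, a return of a point `x i < β` to `[0, β)` after `e < b + d` steps either
raises it by at least `s` (and needs `e ≥ b`) or lowers it by at least `t` (and needs `e ≥ d`).
Together with `β ≤ s + t` this pins down the gap: it is `b` on `[0, β - s)`, `b + d` on
`[β - s, t)` and `d` on `[t, β)`, so the frequencies are the lengths of these intervals once
`(nα)` is known to be equidistributed. Equidistribution is proved elementarily: if
`|α - p/q| < 1/q²`, then `q` consecutive points lie within `1/q` of distinct points of a translate
of `(1/q)ℤ`, so every block of `q` consecutive indices meets `[0, c)` in `qc + O(1)` of them.
-/

open Filter Finset Topology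

theorem Int.fract_fract_add {R : Type*} [Ring R] [LinearOrder R] [IsStrictOrderedRing R]
    [FloorRing R] (a b : R) : Int.fract (Int.fract a + b) = Int.fract (a + b) := by
  rw [Int.fract_eq_fract]
  exact ⟨-⌊a⌋, by rw [Int.fract]; push_cast; abel⟩

theorem Int.fract_add_eq_or {K : Type*} [Field K] [LinearOrder K] [IsStrictOrderedRing K]
    [FloorRing K] (a b : K) :
    Int.fract (a + b) = Int.fract a + Int.fract b ∨
      Int.fract (a + b) = Int.fract a + Int.fract b - 1 := by
  obtain ⟨z, hz⟩ := Int.fract_add a b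
  have hz0 : (z : K) ≤ 0 := by linarith [Int.fract_add_le a b]
  have hz1 : (-1 : K) ≤ z := by linarith [Int.fract_add_fract_le a b]
  obtain rfl | rfl : z = 0 ∨ z = -1 := by
    have : z ≤ 0 := by exact_mod_cast hz0
    have : -1 ≤ z := by exact_mod_cast hz1
    omega
  · left; simp only [Int.cast_zero] at hz; linarith
  · right; simp only [Int.cast_neg, Int.cast_one] at hz; linarith

theorem Rat.den_dvd_of_mul_eq_intCast (r : ℚ) {n z : ℤ} (h : n * r = z) : (r.den : ℤ) ∣ n := by
  have hcop : IsCoprime (r.den : ℤ) r.num := by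
    rw [Int.isCoprime_iff_gcd_eq_one, Int.gcd_comm]
    exact r.reduced
  refine hcop.dvd_of_dvd_mul_right ⟨z, ?_⟩
  have : ((n * r.num : ℤ) : ℚ) = ((r.den * z : ℤ) : ℚ) := by
    rw [Int.cast_mul, Int.cast_mul, ← Rat.mul_den_eq_num, ← mul_assoc, h]; push_cast; ring
  exact_mod_cast this

theorem Irrational.exists_den_gt_abs_sub_lt {ξ : ℝ} (hξ : Irrational ξ) (K : ℕ) :
    ∃ r : ℚ, K < r.den ∧ |ξ - r| < 1 / (r.den : ℝ) ^ 2 := by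
  set M : ℕ := ⌈(|ξ| + 1) * K⌉₊
  obtain ⟨r, hr, hrK⟩ :=
    (Real.infinite_rat_abs_sub_lt_one_div_den_sq_of_irrational hξ).exists_notMem_finset
      ((Icc (-(M : ℤ)) M ×ˢ range (K + 1)).image fun nk => (nk.1 : ℚ) / nk.2)
  refine ⟨r, not_le.1 fun hden => hrK ?_, hr⟩
  have hr1 : |ξ - r| < 1 := hr.trans_le <| by
    rw [div_le_one (by positivity)]
    exact one_le_pow₀ (by exact_mod_cast r.pos)
  have hnum : |(r.num : ℝ)| ≤ M := by
    have hnum_eq : (r.num : ℝ) = r * r.den := by exact_mod_cast (Rat.mul_den_eq_num r).symm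
    rw [hnum_eq, abs_mul, Nat.abs_cast]
    calc |(r : ℝ)| * r.den ≤ (|ξ| + 1) * K := by
          gcongr
          linarith [abs_sub_abs_le_abs_sub (r : ℝ) ξ, abs_sub_comm (r : ℝ) ξ]
      _ ≤ M := Nat.le_ceil _
  have hnum' : |r.num| ≤ M := by exact_mod_cast hnum
  exact mem_image.2 ⟨(r.num, r.den), mem_product.2 ⟨mem_Icc.2 (abs_le.1 hnum'),
    mem_range.2 (Nat.lt_succ_of_le hden)⟩, Rat.num_div_den r⟩

theorem card_le_of_injOn_of_fract_eq {ι : Type*} {s : Finset ι} {f : ι → ℝ} {φ u L : ℝ}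
    (hL : 0 ≤ L) (hinj : Set.InjOn f s) (hφ : ∀ i ∈ s, Int.fract (f i) = φ)
    (hf : ∀ i ∈ s, f i ∈ Set.Ico u (u + L)) :
    (#s : ℝ) ≤ L + 1 := by
  have hfloor : ∀ i ∈ s, (⌊f i⌋ : ℝ) = f i - φ := fun i hi => by
    rw [← hφ i hi, Int.self_sub_fract]
  have hcard : #s ≤ #(Ico ⌈u - φ⌉ ⌈u + L - φ⌉) := by
    refine card_le_card_of_injOn (fun i => ⌊f i⌋) (fun i hi => ?_) (fun i hi j hj hij => ?_)
    · obtain ⟨h1, h2⟩ := hf i hi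
      rw [coe_Ico, Set.mem_Ico, Int.ceil_le, Int.lt_ceil, hfloor i hi]
      constructor <;> linarith
    · have := congrArg (Int.cast : ℤ → ℝ) hij
      simp only [hfloor i hi, hfloor j hj] at this
      exact hinj hi hj (by linarith)
  rw [Int.card_Ico] at hcard
  have hmax : ((⌈u + L - φ⌉ - ⌈u - φ⌉).toNat : ℝ) = max ((⌈u + L - φ⌉ - ⌈u - φ⌉ : ℤ) : ℝ) 0 := by
    exact_mod_cast Int.toNat_eq_max _
  have h1 := Int.ceil_lt_add_one (u + L - φ)
  have h2 := Int.le_ceil (u - φ)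
  calc (#s : ℝ) ≤ ((⌈u + L - φ⌉ - ⌈u - φ⌉).toNat : ℝ) := by exact_mod_cast hcard
    _ ≤ L + 1 := by
      rw [hmax]
      push_cast
      exact max_le (by linarith) (by linarith)

theorem card_fract_add_mul_rat_mem_Ico_le (r : ℚ) (x : ℝ) {A B : ℝ} (hAB : A ≤ B) :
    (#((range r.den).filter (fun j : ℕ => Int.fract (x + j * r) ∈ Set.Ico A B)) : ℝ) ≤
      r.den * (B - A) + 1 := by
  have hq : (0 : ℝ) < r.den := by exact_mod_cast r.pos
  refine card_le_of_injOn_of_fract_eq (f := fun j : ℕ => r.den * Int.fract (x + j * r))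
    (φ := Int.fract (r.den * x)) (u := r.den * A) (L := r.den * (B - A)) (by nlinarith)
    (fun j hj k hk hjk => ?_) (fun j _ => ?_) (fun j hj => ?_)
  · have hj := mem_range.1 (mem_filter.1 hj).1
    have hk := mem_range.1 (mem_filter.1 hk).1
    obtain ⟨z, hz⟩ := Int.fract_eq_fract.1 (mul_left_cancel₀ hq.ne' hjk)
    have hdvd := Rat.den_dvd_of_mul_eq_intCast r (n := (j : ℤ) - k) (z := z) (by
      have : (((j : ℤ) - k : ℤ) : ℝ) * r = z := by push_cast; linarith
      exact_mod_cast this)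
    have := Int.eq_zero_of_abs_lt_dvd hdvd (by rw [abs_lt]; omega)
    omega
  · have hnum : (r.num : ℝ) = r * r.den := by exact_mod_cast (Rat.mul_den_eq_num r).symm
    have hx : (r.den : ℝ) * Int.fract (x + j * r) =
        r.den * x + ((j * r.num - r.den * ⌊x + j * r⌋ : ℤ) : ℝ) := by
      rw [Int.fract]; push_cast; rw [hnum]; ring
    rw [hx, Int.fract_add_intCast]
  · obtain ⟨h1, h2⟩ := (mem_filter.1 hj).2
    constructor <;> nlinarith

theorem abs_card_fract_add_mul_lt_sub_le {α : ℝ} {r : ℚ} (hr : |α - r| < 1 / (r.den : ℝ) ^ 2)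
    (x : ℝ) {c : ℝ} (hc0 : 0 ≤ c) (hc1 : c ≤ 1) :
    |(#((range r.den).filter (fun j : ℕ => Int.fract (x + j * α) < c)) : ℝ) - r.den * c| ≤ 4 := by
  set q := r.den
  have hq : (0 : ℝ) < q := by exact_mod_cast r.pos
  set δ : ℝ := 1 / q with hδdef
  have hδ : 0 ≤ δ := by positivity
  have hqδ : (q : ℝ) * δ = 1 := by rw [hδdef]; field_simp
  set y : ℕ → ℝ := fun j => Int.fract (x + j * r)
  have hy : ∀ j, 0 ≤ y j ∧ y j < 1 := fun j => ⟨Int.fract_nonneg _, Int.fract_lt_one _⟩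
  have hshift : ∀ j : ℕ, Int.fract (x + j * α) = Int.fract (y j + j * (α - r)) := fun j => by
    rw [Int.fract_fract_add]; ring_nf
  have herr : ∀ j ∈ range q, |(j : ℝ) * (α - r)| < δ := fun j hj => by
    have hjq : (j : ℝ) ≤ q := by exact_mod_cast (mem_range.1 hj).le
    calc |(j : ℝ) * (α - r)| ≤ q * |α - r| := by
          rw [abs_mul, Nat.abs_cast]; gcongr
      _ < q * (1 / q ^ 2) := by gcongr
      _ = δ := by rw [hδdef]; field_simp
  have hlat {A B : ℝ} (hAB : A ≤ B) :
      (#((range q).filter (fun j => y j ∈ Set.Ico A B)) : ℝ) ≤ q * (B - A) + 1 :=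
    card_fract_add_mul_rat_mem_Ico_le r x hAB
  rw [abs_le]
  constructor
  · have hcover : range q ⊆ (range q).filter (fun j => y j ∈ Set.Ico 0 δ) ∪
        (range q).filter (fun j => y j ∈ Set.Ico δ (c - δ)) ∪
        (range q).filter (fun j => y j ∈ Set.Ico (c - δ) 1) := by
      intro j hj
      simp only [mem_union, mem_filter, Set.mem_Ico, and_iff_right hj]
      have := hy j
      by_contra! h
      linarith [h.1.1 this.1, h.1.2 (h.1.1 this.1), h.2 (h.1.2 (h.1.1 this.1))]
    have hmid : (range q).filter (fun j => y j ∈ Set.Ico δ (c - δ)) ⊆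
        (range q).filter (fun j : ℕ => Int.fract (x + j * α) < c) := by
      intro j hj
      obtain ⟨hj, h1, h2⟩ := mem_filter.1 hj
      refine mem_filter.2 ⟨hj, ?_⟩
      have := abs_lt.1 (herr j hj)
      rw [hshift, Int.fract_eq_self.2 ⟨by linarith, by linarith⟩]
      linarith
    have h1 := (card_le_card hcover).trans
      ((card_union_le _ _).trans (Nat.add_le_add_right (card_union_le _ _) _))
    rw [card_range] at h1
    have h1' := (Nat.cast_le (α := ℝ)).2 h1
    have h2' := (Nat.cast_le (α := ℝ)).2 (card_le_card hmid)
    push_cast at h1'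
    linarith [hlat hδ, hlat (A := c - δ) (B := 1) (by linarith)]
  · have hcover : (range q).filter (fun j : ℕ => Int.fract (x + j * α) < c) ⊆
        (range q).filter (fun j => y j ∈ Set.Ico 0 (c + δ)) ∪
        (range q).filter (fun j => y j ∈ Set.Ico (1 - δ) 1) := by
      intro j hj
      obtain ⟨hj, hjc⟩ := mem_filter.1 hj
      simp only [mem_union, mem_filter, Set.mem_Ico, and_iff_right hj]
      have := hy j
      have := abs_lt.1 (herr j hj)
      rcases lt_or_ge (y j) (c + δ) with h1 | h1
      · exact Or.inl ⟨(hy j).1, h1⟩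
      refine Or.inr ⟨?_, (hy j).2⟩
      by_contra! h2
      rw [hshift, Int.fract_eq_self.2 ⟨by linarith, by linarith⟩] at hjc
      linarith
    have h1 := (Nat.cast_le (α := ℝ)).2 ((card_le_card hcover).trans (card_union_le _ _))
    push_cast at h1
    linarith [hlat (A := 0) (B := c + δ) (by positivity), hlat (A := 1 - δ) (B := 1) (by linarith)]

theorem abs_sub_mul_le_of_abs_add_sub_le {f : ℕ → ℝ} {q : ℕ} (hq : 0 < q) {c E R : ℝ}
    (hstep : ∀ n, |f (n + q) - f n - q * c| ≤ E) (hinit : ∀ n < q, |f n - n * c| ≤ R) (n : ℕ) :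
    |f n - n * c| ≤ (n / q : ℕ) * E + R := by
  have key : ∀ M, ∀ k < q, |f (k + M * q) - (k + M * q : ℕ) * c| ≤ M * E + R := by
    intro M k hk
    induction M with
    | zero => simpa using hinit k hk
    | succ M ih =>
      rw [show k + (M + 1) * q = k + M * q + q by ring]
      calc |f (k + M * q + q) - ((k + M * q + q : ℕ) : ℝ) * c|
          = |(f (k + M * q + q) - f (k + M * q) - q * c) +
              (f (k + M * q) - ((k + M * q : ℕ) : ℝ) * c)| := by push_cast; ring_nf
        _ ≤ E + (M * E + R) := (abs_add_le _ _).trans (add_le_add (hstep _) ih)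
        _ = ((M + 1 : ℕ) : ℝ) * E + R := by push_cast; ring
  simpa only [Nat.mod_add_div'] using key (n / q) (n % q) (Nat.mod_lt n hq)

theorem tendsto_card_fract_mul_lt_div {α : ℝ} (hα : Irrational α) {c : ℝ} (hc0 : 0 ≤ c)
    (hc1 : c ≤ 1) :
    Tendsto (fun N : ℕ => (#((range N).filter (fun i : ℕ => Int.fract (i * α) < c)) : ℝ) / N)
      atTop (𝓝 c) := by
  set C : ℕ → ℝ := fun N => #((range N).filter (fun i : ℕ => Int.fract (i * α) < c))
  rw [Metric.tendsto_atTop]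
  intro ε hε
  obtain ⟨r, hrK, hr⟩ := hα.exists_den_gt_abs_sub_lt ⌈8 / ε⌉₊
  set q := r.den
  have hq : (0 : ℝ) < q := by exact_mod_cast r.pos
  have hq8 : 8 / ε < q := (Nat.le_ceil _).trans_lt (by exact_mod_cast hrK)
  have hstep : ∀ n, |C (n + q) - C n - q * c| ≤ 4 := fun n => by
    have hsplit : C (n + q) = C n +
        #((range q).filter (fun j : ℕ => Int.fract (n * α + j * α) < c)) := by
      simp only [C, card_filter, sum_range_add, Nat.cast_add, add_mul]
    rw [hsplit, add_sub_cancel_left]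
    exact abs_card_fract_add_mul_lt_sub_le hr _ hc0 hc1
  have hinit : ∀ n < q, |C n - n * c| ≤ q := fun n hn => by
    have h0 : 0 ≤ C n := by positivity
    have h1 : C n ≤ n := by
      simp only [C]; exact_mod_cast (card_filter_le _ _).trans (card_range n).le
    have h2 : (n : ℝ) ≤ q := by exact_mod_cast hn.le
    rw [abs_le]; constructor <;> nlinarith
  refine ⟨⌈2 * q / ε⌉₊ + 1, fun N hN => ?_⟩
  have hN : 2 * q / ε < N := (Nat.le_ceil _).trans_lt (by exact_mod_cast hN)
  have hN0 : (0 : ℝ) < N := lt_of_le_of_lt (by positivity) hN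
  have hbound := abs_sub_mul_le_of_abs_add_sub_le r.pos hstep hinit N
  have hblocks : ((N / q : ℕ) : ℝ) * 4 < ε * N / 2 := by
    calc ((N / q : ℕ) : ℝ) * 4 ≤ N / q * 4 := by gcongr; exact Nat.cast_div_le
      _ < ε * N / 2 := by
        rw [div_lt_iff₀ hε] at hq8
        rw [div_mul_eq_mul_div, div_lt_div_iff₀ hq two_pos]
        nlinarith
  rw [Real.dist_eq, div_sub' hN0.ne', abs_div, abs_of_pos hN0, div_lt_iff₀ hN0]
  rw [div_lt_iff₀ hε] at hN
  change |C N - N * c| < ε * N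
  linarith

theorem tendsto_card_filter_div_of_iff_fract_mem_Ico {α : ℝ} (hα : Irrational α) {u v : ℝ}
    (hu : 0 ≤ u) (huv : u ≤ v) (hv : v ≤ 1) {P : ℕ → Prop} [DecidablePred P]
    (hP : ∀ i, P i ↔ Int.fract (i * α) ∈ Set.Ico u v) :
    Tendsto (fun N : ℕ => (#((range N).filter P) : ℝ) / N) atTop (𝓝 (v - u)) := by
  refine ((tendsto_card_fract_mul_lt_div hα (hu.trans huv) hv).sub
    (tendsto_card_fract_mul_lt_div hα hu (huv.trans hv))).congr fun N => ?_
  have hsplit : #((range N).filter (fun i : ℕ => Int.fract (i * α) < v)) =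
      #((range N).filter (fun i : ℕ => Int.fract (i * α) < u)) + #((range N).filter P) := by
    simp only [card_filter, ← sum_add_distrib, hP, Set.mem_Ico]
    refine sum_congr rfl fun i _ => ?_
    by_cases hu' : Int.fract (i * α) < u
    · simp [hu', hu'.trans_le huv, not_le.2 hu']
    · simp [hu', not_lt.1 hu']
  rw [← sub_div, hsplit, Nat.cast_add, add_sub_cancel_left]

theorem exists_pos_fract_mul_mem_Ico {α : ℝ} (hα : Irrational α) {u v : ℝ} (hu : 0 ≤ u)
    (huv : u < v) (hv : v ≤ 1) : ∃ m : ℕ, 0 < m ∧ Int.fract (m * α) ∈ Set.Ico u v := by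
  by_contra! h
  have hcard : ∀ N : ℕ,
      #((range N).filter (fun i : ℕ => Int.fract (i * α) ∈ Set.Ico u v)) ≤ 1 := fun N =>
    card_le_one.2 fun i hi j hj => by
      have hi0 := Nat.eq_zero_of_not_pos fun h0 => h i h0 (mem_filter.1 hi).2
      have hj0 := Nat.eq_zero_of_not_pos fun h0 => h j h0 (mem_filter.1 hj).2
      rw [hi0, hj0]
  have hzero : Tendsto (fun N : ℕ =>
      (#((range N).filter (fun i : ℕ => Int.fract (i * α) ∈ Set.Ico u v)) : ℝ) / N)
      atTop (𝓝 0) := squeeze_zero (fun N => by positivity)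
    (fun N => div_le_div_of_nonneg_right (by exact_mod_cast hcard N) N.cast_nonneg)
    tendsto_one_div_atTop_nhds_zero_nat
  have := tendsto_nhds_unique
    (tendsto_card_filter_div_of_iff_fract_mem_Ico hα hu huv.le hv fun _ => Iff.rfl) hzero
  linarith

namespace ThreeGap

noncomputable def gap (α β : ℝ) (i : ℕ) : ℕ :=
  sInf {e : ℕ | 0 < e ∧ Int.fract (((i : ℝ) + (e : ℝ)) * α) < β}

theorem fract_natCast_add_mul (α : ℝ) (m n : ℕ) :
    Int.fract (((m + n : ℕ) : ℝ) * α) = Int.fract (m * α) + Int.fract (n * α) ∨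
      Int.fract (((m + n : ℕ) : ℝ) * α) = Int.fract (m * α) + Int.fract (n * α) - 1 := by
  rw [Nat.cast_add, add_mul]
  exact Int.fract_add_eq_or _ _

variable {α β : ℝ} {b d : ℕ}

theorem fract_mul_b_le (hb : IsLeast {m : ℕ | 0 < m ∧ Int.fract ((m : ℝ) * α) < β} b)
    (hd : IsLeast {m : ℕ | 0 < m ∧ 1 - β < Int.fract ((m : ℝ) * α)} d) {e : ℕ} (he0 : 0 < e)
    (he : e < b + d) (heβ : Int.fract ((e : ℝ) * α) < β) :
    Int.fract ((b : ℝ) * α) ≤ Int.fract ((e : ℝ) * α) := by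
  -- otherwise `{(e - b)α} = {eα} - {bα} + 1 > 1 - β`, so `e - b ≥ d`
  by_contra! hlt
  have hbe : b < e := (hb.2 ⟨he0, heβ⟩).lt_of_ne (by rintro rfl; exact lt_irrefl _ hlt)
  have hsplit := fract_natCast_add_mul α (e - b) b
  rw [Nat.sub_add_cancel hbe.le] at hsplit
  have := Int.fract_nonneg (((e - b : ℕ) : ℝ) * α)
  have := Int.fract_nonneg ((e : ℝ) * α)
  have := hb.1.2
  have hde : d ≤ e - b := hd.2 ⟨Nat.sub_pos_of_lt hbe, by rcases hsplit with h | h <;> linarith⟩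
  omega

theorem fract_mul_le_d (hb : IsLeast {m : ℕ | 0 < m ∧ Int.fract ((m : ℝ) * α) < β} b)
    (hd : IsLeast {m : ℕ | 0 < m ∧ 1 - β < Int.fract ((m : ℝ) * α)} d) {e : ℕ} (he0 : 0 < e)
    (he : e < b + d) (heβ : 1 - β < Int.fract ((e : ℝ) * α)) :
    Int.fract ((e : ℝ) * α) ≤ Int.fract ((d : ℝ) * α) := by
  -- otherwise `{(e - d)α} = {eα} - {dα} < β`, so `e - d ≥ b`
  by_contra! hlt
  have hde : d < e := (hd.2 ⟨he0, heβ⟩).lt_of_ne (by rintro rfl; exact lt_irrefl _ hlt)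
  have hsplit := fract_natCast_add_mul α (e - d) d
  rw [Nat.sub_add_cancel hde.le] at hsplit
  have := Int.fract_lt_one (((e - d : ℕ) : ℝ) * α)
  have := Int.fract_lt_one ((e : ℝ) * α)
  have := hd.1.2
  have hbe : b ≤ e - d := hb.2 ⟨Nat.sub_pos_of_lt hde, by rcases hsplit with h | h <;> linarith⟩
  omega

theorem b_ne_d (hb : IsLeast {m : ℕ | 0 < m ∧ Int.fract ((m : ℝ) * α) < β} b)
    (hd : IsLeast {m : ℕ | 0 < m ∧ 1 - β < Int.fract ((m : ℝ) * α)} d) (hα0 : 0 ≤ α)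
    (hα1 : α < 1) (hβmax : β < max α (1 - α)) : b ≠ d := by
  rintro rfl
  have hb1 := hb.1.2
  have hd1 := hd.1.2
  rcases Nat.lt_or_ge b 2 with hb2 | hb2
  · obtain rfl : b = 1 := by have := hb.1.1; omega
    rw [Nat.cast_one, one_mul, Int.fract_eq_self.2 ⟨hα0, hα1⟩] at hb1 hd1
    exact lt_asymm hβmax (max_lt hb1 (by linarith))
  · have h1 : β ≤ Int.fract (((b - 1 : ℕ) : ℝ) * α) :=
      not_lt.1 fun h => absurd (hb.2 ⟨by omega, h⟩) (by omega)
    have h2 : Int.fract (((b - 1 : ℕ) : ℝ) * α) ≤ 1 - β :=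
      not_lt.1 fun h => absurd (hd.2 ⟨by omega, h⟩) (by omega)
    linarith

theorem le_fract_mul_b_add_one_sub_fract_mul_d
    (hb : IsLeast {m : ℕ | 0 < m ∧ Int.fract ((m : ℝ) * α) < β} b)
    (hd : IsLeast {m : ℕ | 0 < m ∧ 1 - β < Int.fract ((m : ℝ) * α)} d) (hbd : b ≠ d) :
    β ≤ Int.fract ((b : ℝ) * α) + (1 - Int.fract ((d : ℝ) * α)) := by
  by_contra! h
  rcases Nat.lt_or_gt_of_ne hbd with hlt | hlt
  · have hsplit := fract_natCast_add_mul α (d - b) b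
    rw [Nat.sub_add_cancel hlt.le] at hsplit
    have hdb : d ≤ d - b := hd.2 ⟨Nat.sub_pos_of_lt hlt, by rcases hsplit with h' | h' <;> linarith⟩
    have := hb.1.1
    omega
  · have hsplit := fract_natCast_add_mul α (b - d) d
    rw [Nat.sub_add_cancel hlt.le] at hsplit
    have hbd : b ≤ b - d := hb.2 ⟨Nat.sub_pos_of_lt hlt, by rcases hsplit with h' | h' <;> linarith⟩
    have := hd.1.1
    omega

theorem fract_return_cases (hb : IsLeast {m : ℕ | 0 < m ∧ Int.fract ((m : ℝ) * α) < β} b)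
    (hd : IsLeast {m : ℕ | 0 < m ∧ 1 - β < Int.fract ((m : ℝ) * α)} d) {i e : ℕ}
    (hi : Int.fract ((i : ℝ) * α) < β) (he0 : 0 < e) (he : e < b + d)
    (hie : Int.fract (((i : ℝ) + (e : ℝ)) * α) < β) :
    (b ≤ e ∧ Int.fract ((i : ℝ) * α) + Int.fract ((b : ℝ) * α) ≤
        Int.fract (((i : ℝ) + (e : ℝ)) * α)) ∨
      (d ≤ e ∧ Int.fract (((i : ℝ) + (e : ℝ)) * α) ≤
        Int.fract ((i : ℝ) * α) - (1 - Int.fract ((d : ℝ) * α))) := by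
  have := Int.fract_nonneg ((i : ℝ) * α)
  have := Int.fract_nonneg (((i : ℝ) + (e : ℝ)) * α)
  rcases add_mul (i : ℝ) e α ▸ Int.fract_add_eq_or ((i : ℝ) * α) ((e : ℝ) * α) with h | h
  · have hbe := hb.2 ⟨he0, by linarith⟩
    exact Or.inl ⟨hbe, by linarith [fract_mul_b_le hb hd he0 he (by linarith)]⟩
  · have hde := hd.2 ⟨he0, by linarith⟩
    exact Or.inr ⟨hde, by linarith [fract_mul_le_d hb hd he0 he (by linarith)]⟩

theorem gap_eq_b (hb : IsLeast {m : ℕ | 0 < m ∧ Int.fract ((m : ℝ) * α) < β} b)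
    (hd : IsLeast {m : ℕ | 0 < m ∧ 1 - β < Int.fract ((m : ℝ) * α)} d)
    (hst : β ≤ Int.fract ((b : ℝ) * α) + (1 - Int.fract ((d : ℝ) * α))) {i : ℕ}
    (hi : Int.fract ((i : ℝ) * α) < β - Int.fract ((b : ℝ) * α)) : gap α β i = b := by
  have := Int.fract_nonneg ((b : ℝ) * α)
  refine IsLeast.csInf_eq ⟨⟨hb.1.1, ?_⟩, fun e ⟨he0, he⟩ => not_lt.1 fun heb => ?_⟩
  · rcases add_mul (i : ℝ) b α ▸ Int.fract_add_eq_or ((i : ℝ) * α) ((b : ℝ) * α) with h | h <;>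
      linarith
  · rcases fract_return_cases hb hd (by linarith) he0 (by omega) he with ⟨h, -⟩ | ⟨-, h⟩
    · omega
    · linarith [Int.fract_nonneg (((i : ℝ) + (e : ℝ)) * α)]

theorem gap_eq_d (hb : IsLeast {m : ℕ | 0 < m ∧ Int.fract ((m : ℝ) * α) < β} b)
    (hd : IsLeast {m : ℕ | 0 < m ∧ 1 - β < Int.fract ((m : ℝ) * α)} d)
    (hst : β ≤ Int.fract ((b : ℝ) * α) + (1 - Int.fract ((d : ℝ) * α))) {i : ℕ}
    (hi₁ : 1 - Int.fract ((d : ℝ) * α) ≤ Int.fract ((i : ℝ) * α))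
    (hi₂ : Int.fract ((i : ℝ) * α) < β) : gap α β i = d := by
  refine IsLeast.csInf_eq ⟨⟨hd.1.1, ?_⟩, fun e ⟨he0, he⟩ => not_lt.1 fun hed => ?_⟩
  · have := Int.fract_lt_one (((i : ℝ) + (d : ℝ)) * α)
    have := Int.fract_lt_one ((d : ℝ) * α)
    rcases add_mul (i : ℝ) d α ▸ Int.fract_add_eq_or ((i : ℝ) * α) ((d : ℝ) * α) with h | h <;>
      linarith
  · rcases fract_return_cases hb hd hi₂ he0 (by omega) he with ⟨-, h⟩ | ⟨h, -⟩
    · linarith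
    · omega

theorem gap_eq_b_add_d (hb : IsLeast {m : ℕ | 0 < m ∧ Int.fract ((m : ℝ) * α) < β} b)
    (hd : IsLeast {m : ℕ | 0 < m ∧ 1 - β < Int.fract ((m : ℝ) * α)} d) {i : ℕ}
    (hi₁ : β - Int.fract ((b : ℝ) * α) ≤ Int.fract ((i : ℝ) * α))
    (hi₂ : Int.fract ((i : ℝ) * α) < 1 - Int.fract ((d : ℝ) * α)) : gap α β i = b + d := by
  have := hd.1.2
  refine IsLeast.csInf_eq ⟨⟨by have := hb.1.1; omega, ?_⟩,
    fun e ⟨he0, he⟩ => not_lt.1 fun hebd => ?_⟩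
  · have hval : Int.fract (((i : ℝ) + ((b + d : ℕ) : ℝ)) * α) =
        Int.fract ((i : ℝ) * α) + Int.fract ((b : ℝ) * α) + Int.fract ((d : ℝ) * α) - 1 := by
      refine Int.fract_eq_iff.2 ⟨by linarith, by linarith [Int.fract_lt_one ((b : ℝ) * α)],
        ⌊(i : ℝ) * α⌋ + ⌊(b : ℝ) * α⌋ + ⌊(d : ℝ) * α⌋ + 1, ?_⟩
      simp only [Int.fract]
      push_cast
      ring
    rw [hval]
    linarith [hb.1.2]
  · rcases fract_return_cases hb hd (by linarith) he0 hebd he with ⟨-, h⟩ | ⟨-, h⟩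
    · linarith
    · linarith [Int.fract_nonneg (((i : ℝ) + (e : ℝ)) * α)]

theorem fract_lt_and_gap_eq_b_iff (hb : IsLeast {m : ℕ | 0 < m ∧ Int.fract ((m : ℝ) * α) < β} b)
    (hd : IsLeast {m : ℕ | 0 < m ∧ 1 - β < Int.fract ((m : ℝ) * α)} d) (hbd : b ≠ d)
    (hst : β ≤ Int.fract ((b : ℝ) * α) + (1 - Int.fract ((d : ℝ) * α))) (i : ℕ) :
    Int.fract ((i : ℝ) * α) < β ∧ gap α β i = b ↔
      Int.fract ((i : ℝ) * α) ∈ Set.Ico 0 (β - Int.fract ((b : ℝ) * α)) := by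
  refine ⟨fun ⟨hi, hgap⟩ => ⟨Int.fract_nonneg _, not_le.1 fun hi₁ => ?_⟩, fun ⟨_, hi⟩ =>
    ⟨by linarith [Int.fract_nonneg ((b : ℝ) * α)], gap_eq_b hb hd hst hi⟩⟩
  rcases lt_or_ge (Int.fract ((i : ℝ) * α)) (1 - Int.fract ((d : ℝ) * α)) with hi₂ | hi₂
  · have := hd.1.1
    rw [gap_eq_b_add_d hb hd hi₁ hi₂] at hgap
    omega
  · exact hbd (gap_eq_d hb hd hst hi₂ hi ▸ hgap).symm

theorem fract_lt_and_gap_eq_d_iff (hb : IsLeast {m : ℕ | 0 < m ∧ Int.fract ((m : ℝ) * α) < β} b)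
    (hd : IsLeast {m : ℕ | 0 < m ∧ 1 - β < Int.fract ((m : ℝ) * α)} d) (hbd : b ≠ d)
    (hst : β ≤ Int.fract ((b : ℝ) * α) + (1 - Int.fract ((d : ℝ) * α))) (i : ℕ) :
    Int.fract ((i : ℝ) * α) < β ∧ gap α β i = d ↔
      Int.fract ((i : ℝ) * α) ∈ Set.Ico (1 - Int.fract ((d : ℝ) * α)) β := by
  refine ⟨fun ⟨hi, hgap⟩ => ⟨not_lt.1 fun hi₂ => ?_, hi⟩, fun ⟨hi₁, hi₂⟩ =>
    ⟨hi₂, gap_eq_d hb hd hst hi₁ hi₂⟩⟩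
  rcases lt_or_ge (Int.fract ((i : ℝ) * α)) (β - Int.fract ((b : ℝ) * α)) with hi₁ | hi₁
  · exact hbd (gap_eq_b hb hd hst hi₁ ▸ hgap)
  · have := hb.1.1
    rw [gap_eq_b_add_d hb hd hi₁ hi₂] at hgap
    omega

theorem fract_lt_and_gap_eq_b_add_d_iff
    (hb : IsLeast {m : ℕ | 0 < m ∧ Int.fract ((m : ℝ) * α) < β} b)
    (hd : IsLeast {m : ℕ | 0 < m ∧ 1 - β < Int.fract ((m : ℝ) * α)} d)
    (hst : β ≤ Int.fract ((b : ℝ) * α) + (1 - Int.fract ((d : ℝ) * α))) (i : ℕ) :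
    Int.fract ((i : ℝ) * α) < β ∧ gap α β i = b + d ↔
      Int.fract ((i : ℝ) * α) ∈
        Set.Ico (β - Int.fract ((b : ℝ) * α)) (1 - Int.fract ((d : ℝ) * α)) := by
  refine ⟨fun ⟨hi, hgap⟩ => ⟨not_lt.1 fun hi₁ => ?_, not_le.1 fun hi₂ => ?_⟩, fun ⟨hi₁, hi₂⟩ =>
    ⟨by linarith [hd.1.2], gap_eq_b_add_d hb hd hi₁ hi₂⟩⟩
  · have := hd.1.1
    rw [gap_eq_b hb hd hst hi₁] at hgap
    omega
  · have := hb.1.1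
    rw [gap_eq_d hb hd hst hi₂ hi] at hgap
    omega

end ThreeGap

open ThreeGap

/-- **Three gap theorem, case 2**, frequencies: with `β < max(α, 1-α)`,
the asymptotic frequency of indices `i` with `{iα} < β` whose gap is `b`
equals `β - s`, that of gap `d` equals `β - t`, and that of gap `b + d`
equals `s + t - β`. -/
theorem three_gap_case_two_frequencies
    (α β : ℝ) (hα : α ∈ Set.Ioo (0 : ℝ) 1) (hirr : Irrational α)
    (hβ : β ∈ Set.Ioo (0 : ℝ) 1) (hβmax : β < max α (1 - α)) :
    let gap : ℕ → ℕ := fun i => sInf {e : ℕ | 0 < e ∧ Int.fract (((i : ℝ) + (e : ℝ)) * α) < β}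
    let b : ℕ := sInf {m : ℕ | 0 < m ∧ Int.fract ((m : ℝ) * α) < β}
    let d : ℕ := sInf {m : ℕ | 0 < m ∧ 1 - β < Int.fract ((m : ℝ) * α)}
    let s : ℝ := Int.fract ((b : ℝ) * α)
    let t : ℝ := 1 - Int.fract ((d : ℝ) * α)
    Tendsto (fun N : ℕ =>
        (((Finset.range N).filter
            (fun i : ℕ => Int.fract ((i : ℝ) * α) < β ∧ gap i = b)).card : ℝ) / (N : ℝ))
      atTop (nhds (β - s)) ∧
    Tendsto (fun N : ℕ =>
        (((Finset.range N).filter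
            (fun i : ℕ => Int.fract ((i : ℝ) * α) < β ∧ gap i = d)).card : ℝ) / (N : ℝ))
      atTop (nhds (β - t)) ∧
    Tendsto (fun N : ℕ =>
        (((Finset.range N).filter
            (fun i : ℕ => Int.fract ((i : ℝ) * α) < β ∧ gap i = b + d)).card : ℝ) / (N : ℝ))
      atTop (nhds (s + t - β)) := by
  intro gap b d s t
  obtain ⟨hα0, hα1⟩ := hα
  obtain ⟨hβ0, hβ1⟩ := hβ
  have hb : IsLeast {m : ℕ | 0 < m ∧ Int.fract ((m : ℝ) * α) < β} b := by
    obtain ⟨m, hm, hm'⟩ := exists_pos_fract_mul_mem_Ico hirr le_rfl hβ0 hβ1.le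
    exact isLeast_csInf ⟨m, hm, hm'.2⟩
  have hd : IsLeast {m : ℕ | 0 < m ∧ 1 - β < Int.fract ((m : ℝ) * α)} d := by
    obtain ⟨m, hm, hm'⟩ :=
      exists_pos_fract_mul_mem_Ico hirr (u := 1 - β / 2) (by linarith) (by linarith) le_rfl
    exact isLeast_csInf ⟨m, hm, by linarith [hm'.1]⟩
  have hbd := b_ne_d hb hd hα0.le hα1 hβmax
  have hst := le_fract_mul_b_add_one_sub_fract_mul_d hb hd hbd
  have hs := Int.fract_nonneg ((b : ℝ) * α)
  have ht := Int.fract_lt_one ((d : ℝ) * α)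
  have hsβ := hb.1.2
  have htβ := hd.1.2
  refine ⟨?_, ?_, ?_⟩
  · rw [← sub_zero (β - s)]
    exact tendsto_card_filter_div_of_iff_fract_mem_Ico hirr le_rfl (by linarith) (by linarith)
      (fract_lt_and_gap_eq_b_iff hb hd hbd hst)
  · exact tendsto_card_filter_div_of_iff_fract_mem_Ico hirr (by linarith) (by linarith) hβ1.le
      (fract_lt_and_gap_eq_d_iff hb hd hbd hst)
  · rw [show s + t - β = t - (β - s) by ring]
    exact tendsto_card_filter_div_of_iff_fract_mem_Ico hirr (by linarith) (by linarith)
      (by linarith) (fract_lt_and_gap_eq_b_add_d_iff hb hd hst)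
end
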